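/- arXiv:2408.02325 — 9 statements merged into one kernel-verified Lean document; each statement's English description precedes it below -/
import Mathlib

section
/- Let A be a symmetric 2×2 real matrix that is ℝ-equivalent to the split binary matrix S₂, and let B be a symmetric 4×4 real matrix that is ℝ-equivalent to the split quaternary matrix S₄. Then the set U(ℝ) := {M ∈ Mat₄ₓ₂(ℝ) : MᵀBM = A} is nonempty, and the group SO(B)(ℝ) := {g ∈ Mat₄ₓ₄(ℝ) : gᵀBg = B and det g = 1}, acting on U(ℝ) by left multiplication M ↦ gM, acts transitively on U(ℝ): for all M, M′ ∈ U(ℝ) there exists g ∈ SO(B)(ℝ) with gM = M′. -/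
/-!
Through `x ↦ !![x₀, x₁; -x₂, x₃]`, the quadratic form of `S₄` becomes twice the determinant on
`2 × 2` matrices, and the map `X ↦ P * X * Qᵀ` is given by a `4 × 4` matrix of determinant
`(det P * det Q) ^ 2` (the Kronecker product `P ⊗ Q` up to a sign change of one coordinate) which
scales the form by `det P * det Q`. The columns of a solution `N` of `Nᵀ * S₄ * N = S₂` become
singular matrices `U`, `V` with `det (U + V) = 1`. Then `T = U + V` lies in `SL₂`, `T⁻¹ * U` is an
idempotent of rank one, and conjugating it to `diag(1, 0)` by some `s` gives `P = T * s`,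
`Q = s⁻¹` with `P * diag(1, 0) * Q = U` and `P * diag(0, 1) * Q = V`. So every solution lies in
the `SO(S₄)`-orbit of the base point `(e₁, e₄)`; general `A`, `B` are reduced to `S₂`, `S₄` by the
congruences relating them.
-/

open Matrix

/-- Two symmetric `n × n` matrices `M`, `M'` over a field are equivalent if
`M' = Pᵀ * M * P` for some invertible `P`. -/
def MatrixEquiv {n : ℕ} (M M' : Matrix (Fin n) (Fin n) ℝ) : Prop :=
  ∃ P : Matrix (Fin n) (Fin n) ℝ, IsUnit P ∧ M' = Pᵀ * M * P

/-- The split binary matrix `S₂` (the quadratic form `2·x₁·x₂`). -/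
def splitBinary : Matrix (Fin 2) (Fin 2) ℝ :=
  Matrix.of fun i j => if i ≠ j then 1 else 0

/-- The split quaternary matrix `S₄` (the quadratic form `2·x₁·x₄ + 2·x₂·x₃`);
with zero-based indices, `(S₄)ᵢⱼ = 1` iff `i + j = 3`. -/
def splitQuaternary : Matrix (Fin 4) (Fin 4) ℝ :=
  Matrix.of fun i j => if (i : ℕ) + (j : ℕ) = 3 then 1 else 0

open Kronecker

section Congruence

variable {K : Type*} [CommRing K] {m n : Type*}

theorem transpose_inv_mul_congr_mul_inv [Fintype m] [DecidableEq m] {C : Matrix m m K}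
    (hC : IsUnit C) (B : Matrix m m K) : C⁻¹ᵀ * (Cᵀ * B * C) * C⁻¹ = B := by
  have hC' : IsUnit C.det := (isUnit_iff_isUnit_det C).1 hC
  rw [transpose_nonsing_inv, mul_assoc, mul_nonsing_inv_cancel_right _ _ hC',
    nonsing_inv_mul_cancel_left _ _ (by rwa [det_transpose])]

theorem transpose_mul_mul_eq_of_congr [Fintype m] [Fintype n] [DecidableEq n]
    {C : Matrix m m K} {P : Matrix n n K} (hP : IsUnit P) {B : Matrix m m K} {A : Matrix n n K}
    {N : Matrix m n K} (hN : Nᵀ * (Cᵀ * B * C) * N = Pᵀ * A * P) :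
    (C * N * P⁻¹)ᵀ * B * (C * N * P⁻¹) = A := by
  rw [← transpose_inv_mul_congr_mul_inv hP A, ← hN]
  simp only [transpose_mul, Matrix.mul_assoc]

def IsSOTransitive [Fintype m] [DecidableEq m] (B : Matrix m m K) (A : Matrix n n K) : Prop :=
  ∀ M M' : Matrix m n K, Mᵀ * B * M = A → M'ᵀ * B * M' = A →
    ∃ g : Matrix m m K, gᵀ * B * g = B ∧ g.det = 1 ∧ g * M = M'

theorem IsSOTransitive.of_forall_exists_mul_eq [Fintype m] [DecidableEq m] {B : Matrix m m K}
    {A : Matrix n n K} (N₀ : Matrix m n K)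
    (h : ∀ N : Matrix m n K, Nᵀ * B * N = A →
      ∃ g : Matrix m m K, gᵀ * B * g = B ∧ g.det = 1 ∧ g * N₀ = N) :
    IsSOTransitive B A := by
  intro M M' hM hM'
  obtain ⟨g, hgB, hgdet, rfl⟩ := h M hM
  obtain ⟨g', hg'B, hg'det, rfl⟩ := h M' hM'
  have hg : IsUnit g.det := hgdet ▸ isUnit_one
  refine ⟨g' * g⁻¹, ?_, ?_, ?_⟩
  · calc (g' * g⁻¹)ᵀ * B * (g' * g⁻¹) = g⁻¹ᵀ * (g'ᵀ * B * g') * g⁻¹ := by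
          simp only [transpose_mul, Matrix.mul_assoc]
      _ = B := by
          rw [hg'B]
          nth_rw 1 [← hgB]
          exact transpose_inv_mul_congr_mul_inv ((isUnit_iff_isUnit_det g).2 hg) B
  · rw [det_mul, det_nonsing_inv, hgdet, hg'det, Ring.inverse_one, mul_one]
  · rw [Matrix.mul_assoc, nonsing_inv_mul_cancel_left _ _ hg]

theorem IsSOTransitive.of_congr [Fintype m] [DecidableEq m] [Fintype n] [DecidableEq n]
    {B : Matrix m m K} {A : Matrix n n K} {C : Matrix m m K} {P : Matrix n n K}
    (hC : IsUnit C) (hP : IsUnit P) (h : IsSOTransitive (Cᵀ * B * C) (Pᵀ * A * P)) :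
    IsSOTransitive B A := by
  have hC' : IsUnit C.det := (isUnit_iff_isUnit_det C).1 hC
  have hP' : IsUnit P.det := (isUnit_iff_isUnit_det P).1 hP
  have pull : ∀ M : Matrix m n K, Mᵀ * B * M = A →
      (C⁻¹ * M * P)ᵀ * (Cᵀ * B * C) * (C⁻¹ * M * P) = Pᵀ * A * P := fun M hM => by
    calc (C⁻¹ * M * P)ᵀ * (Cᵀ * B * C) * (C⁻¹ * M * P)
        = Pᵀ * (Mᵀ * (C⁻¹ᵀ * (Cᵀ * B * C) * C⁻¹) * M) * P := by
          simp only [transpose_mul, Matrix.mul_assoc]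
      _ = Pᵀ * A * P := by rw [transpose_inv_mul_congr_mul_inv hC, hM]
  intro M M' hM hM'
  obtain ⟨g, hgB, hgdet, hgM⟩ := h _ _ (pull M hM) (pull M' hM')
  refine ⟨C * g * C⁻¹, ?_, ?_, ?_⟩
  · calc (C * g * C⁻¹)ᵀ * B * (C * g * C⁻¹) = C⁻¹ᵀ * (gᵀ * (Cᵀ * B * C) * g) * C⁻¹ := by
          simp only [transpose_mul, Matrix.mul_assoc]
      _ = B := by rw [hgB, transpose_inv_mul_congr_mul_inv hC]
  · rw [det_conj hC, hgdet]
  · calc C * g * C⁻¹ * M = C * (g * (C⁻¹ * M * P)) * P⁻¹ := by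
          simp only [Matrix.mul_assoc, mul_nonsing_inv_cancel_right _ _ hP']
      _ = M' := by
          rw [hgM, ← Matrix.mul_assoc C, mul_nonsing_inv_cancel_right _ _ hP',
            mul_nonsing_inv_cancel_left _ _ hC']

end Congruence

section TwoByTwo

variable {K : Type*} [Field K]

theorem exists_isUnit_mul_eq_mul_of_det_eq_zero_of_trace_eq_one {e : Matrix (Fin 2) (Fin 2) K}
    (hdet : e.det = 0) (htr : e.trace = 1) :
    ∃ s : Matrix (Fin 2) (Fin 2) K, IsUnit s ∧ e * s = s * !![1, 0; 0, 0] := by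
  obtain ⟨a, b, c, d, rfl⟩ : ∃ a b c d : K, e = !![a, b; c, d] := ⟨_, _, _, _, eta_fin_two e⟩
  simp only [det_fin_two_of, trace_fin_two_of] at hdet htr
  -- The columns of `s` are a vector fixed by `e` and a vector killed by `e`.
  by_cases ha : a = 0
  · refine ⟨!![b, 1; 1, -c], ?_, ?_⟩
    · rw [isUnit_iff_isUnit_det, det_fin_two_of, isUnit_iff_ne_zero]
      grind
    · rw [mul_fin_two, mul_fin_two]; grind
  · refine ⟨!![a, -b; c, a], ?_, ?_⟩
    · rw [isUnit_iff_isUnit_det, det_fin_two_of, isUnit_iff_ne_zero]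
      grind
    · rw [mul_fin_two, mul_fin_two]; grind

theorem trace_adjugate_add_mul (U V : Matrix (Fin 2) (Fin 2) K) :
    (adjugate (U + V) * U).trace = (U + V).det + U.det - V.det := by
  simp only [adjugate_fin_two, Matrix.add_apply, neg_add_rev, cons_mul, Nat.succ_eq_add_one,
    Nat.reduceAdd, empty_mul, Equiv.symm_apply_apply, trace_fin_two, of_apply, cons_val', vecMul,
    dotProduct, Fin.sum_univ_two, cons_val_zero, cons_val_one, cons_val_fin_one, det_fin_two]
  ring

theorem exists_mul_mul_eq_of_det_eq_zero_of_det_add_eq_one {U V : Matrix (Fin 2) (Fin 2) K}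
    (hU : U.det = 0) (hV : V.det = 0) (hUV : (U + V).det = 1) :
    ∃ P Q : Matrix (Fin 2) (Fin 2) K, P.det * Q.det = 1 ∧
      P * !![1, 0; 0, 0] * Q = U ∧ P * !![0, 0; 0, 1] * Q = V := by
  set T := U + V
  obtain ⟨s, hs, hes⟩ := exists_isUnit_mul_eq_mul_of_det_eq_zero_of_trace_eq_one
    (e := adjugate T * U) (by rw [det_mul, hU, mul_zero])
    (by rw [trace_adjugate_add_mul, hU, hV, hUV]; ring)
  have hsu : IsUnit s.det := (isUnit_iff_isUnit_det s).1 hs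
  have hTU : T * s * !![1, 0; 0, 0] * s⁻¹ = U := by
    rw [mul_assoc T s, ← hes, mul_assoc T, mul_nonsing_inv_cancel_right _ _ hsu, ← mul_assoc,
      mul_adjugate, hUV, one_smul, one_mul]
  refine ⟨T * s, s⁻¹, ?_, hTU, ?_⟩
  · rw [det_mul, mul_assoc, ← det_mul, mul_nonsing_inv _ hsu, det_one, mul_one, hUV]
  · have hF : !![(0 : K), 0; 0, 1] = 1 - !![1, 0; 0, 0] := by
      rw [one_fin_two]; simp
    rw [hF, mul_sub, sub_mul, mul_one, mul_nonsing_inv_cancel_right _ _ hsu, hTU]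
    exact add_sub_cancel_left U V

end TwoByTwo

section TwistedKronecker

variable {R : Type*} [CommRing R]

def toMat2 (x : Fin 4 → R) : Matrix (Fin 2) (Fin 2) R := !![x 0, x 1; -x 2, x 3]

theorem toMat2_injective : Function.Injective (toMat2 : (Fin 4 → R) → _) := by
  intro x y h
  simp only [toMat2, EmbeddingLike.apply_eq_iff_eq, vecCons_inj, and_true, neg_inj] at h
  funext i; fin_cases i <;> simp [h]

def signFlip : Matrix (Fin 4) (Fin 4) R := diagonal ![1, 1, -1, 1]

def twistedKronecker (X Y : Matrix (Fin 2) (Fin 2) R) : Matrix (Fin 4) (Fin 4) R :=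
  signFlip * (X ⊗ₖ Y).submatrix finProdFinEquiv.symm finProdFinEquiv.symm * signFlip

theorem signFlip_mul_signFlip : (signFlip : Matrix (Fin 4) (Fin 4) R) * signFlip = 1 := by
  rw [signFlip, diagonal_mul_diagonal, ← diagonal_one]
  congr 1; ext i; fin_cases i <;> simp

theorem toMat2_twistedKronecker_mulVec (X Y : Matrix (Fin 2) (Fin 2) R) (x : Fin 4 → R) :
    toMat2 (twistedKronecker X Y *ᵥ x) = X * toMat2 x * Yᵀ := by
  ext i j; fin_cases i <;> fin_cases j <;>
    simp [toMat2, twistedKronecker, signFlip, mulVec, dotProduct, Fin.sum_univ_four, mul_apply,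
      Fin.sum_univ_two, finProdFinEquiv, Fin.divNat, Fin.modNat] <;> ring

theorem transpose_twistedKronecker (X Y : Matrix (Fin 2) (Fin 2) R) :
    (twistedKronecker X Y)ᵀ = twistedKronecker Xᵀ Yᵀ := by
  simp [twistedKronecker, transpose_mul, signFlip, kroneckerMap_transpose, mul_assoc]

theorem twistedKronecker_mul (X Y X' Y' : Matrix (Fin 2) (Fin 2) R) :
    twistedKronecker X Y * twistedKronecker X' Y' = twistedKronecker (X * X') (Y * Y') := by
  simp only [twistedKronecker, mul_assoc]
  rw [← mul_assoc signFlip signFlip, signFlip_mul_signFlip, one_mul,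
    ← mul_assoc (submatrix _ _ _), submatrix_mul_equiv, mul_kronecker_mul]

theorem twistedKronecker_smul (X Y : Matrix (Fin 2) (Fin 2) R) (a b : R) :
    twistedKronecker (a • X) (b • Y) = (a * b) • twistedKronecker X Y := by
  simp only [twistedKronecker, smul_kronecker, kronecker_smul, smul_smul, submatrix_smul,
    Pi.smul_apply, Matrix.mul_smul, Matrix.smul_mul, mul_comm b a]

theorem det_twistedKronecker (X Y : Matrix (Fin 2) (Fin 2) R) :
    (twistedKronecker X Y).det = X.det ^ 2 * Y.det ^ 2 := by
  rw [twistedKronecker, det_mul, det_mul, mul_right_comm, ← det_mul, signFlip_mul_signFlip,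
    det_one, one_mul, det_submatrix_equiv_self, det_kronecker]
  simp

def sympForm : Matrix (Fin 2) (Fin 2) R := !![0, 1; -1, 0]

theorem transpose_mul_sympForm_mul (P : Matrix (Fin 2) (Fin 2) R) :
    Pᵀ * sympForm * P = P.det • sympForm := by
  ext i j; fin_cases i <;> fin_cases j <;>
    simp [sympForm, det_fin_two, mul_apply, Fin.sum_univ_two] <;> ring

end TwistedKronecker

theorem splitQuaternary_eq_twistedKronecker :
    splitQuaternary = twistedKronecker sympForm sympForm := by
  ext i j; fin_cases i <;> fin_cases j <;>
    simp [splitQuaternary, twistedKronecker, signFlip, sympForm, mul_apply, Fin.sum_univ_four,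
      finProdFinEquiv, Fin.divNat, Fin.modNat]

theorem transpose_twistedKronecker_mul_splitQuaternary_mul (P Q : Matrix (Fin 2) (Fin 2) ℝ) :
    (twistedKronecker P Q)ᵀ * splitQuaternary * twistedKronecker P Q =
      (P.det * Q.det) • splitQuaternary := by
  rw [splitQuaternary_eq_twistedKronecker, transpose_twistedKronecker, twistedKronecker_mul,
    twistedKronecker_mul, transpose_mul_sympForm_mul, transpose_mul_sympForm_mul,
    twistedKronecker_smul]

theorem transpose_mul_splitQuaternary_mul (N : Matrix (Fin 4) (Fin 2) ℝ) :
    Nᵀ * splitQuaternary * N =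
      !![2 * (toMat2 (Nᵀ 0)).det,
          (toMat2 (Nᵀ 0) + toMat2 (Nᵀ 1)).det - (toMat2 (Nᵀ 0)).det - (toMat2 (Nᵀ 1)).det;
        (toMat2 (Nᵀ 0) + toMat2 (Nᵀ 1)).det - (toMat2 (Nᵀ 0)).det - (toMat2 (Nᵀ 1)).det,
          2 * (toMat2 (Nᵀ 1)).det] := by
  ext i j; fin_cases i <;> fin_cases j <;>
    simp [splitQuaternary, toMat2, det_fin_two, mul_apply, Fin.sum_univ_four] <;> ring

theorem transpose_mul_splitQuaternary_mul_eq_splitBinary_iff (N : Matrix (Fin 4) (Fin 2) ℝ) :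
    Nᵀ * splitQuaternary * N = splitBinary ↔ (toMat2 (Nᵀ 0)).det = 0 ∧
      (toMat2 (Nᵀ 1)).det = 0 ∧ (toMat2 (Nᵀ 0) + toMat2 (Nᵀ 1)).det = 1 := by
  have hS : splitBinary = !![0, 1; 1, 0] := by ext i j; fin_cases i <;> fin_cases j <;> rfl
  rw [transpose_mul_splitQuaternary_mul, hS, EmbeddingLike.apply_eq_iff_eq]
  simp only [vecCons_inj, and_true]
  grind

def splitBasePoint : Matrix (Fin 4) (Fin 2) ℝ := !![1, 0; 0, 0; 0, 0; 0, 1]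

theorem toMat2_transpose_splitBasePoint_zero : toMat2 (splitBasePointᵀ 0) = !![1, 0; 0, 0] := by
  ext i j; fin_cases i <;> fin_cases j <;> simp [toMat2, splitBasePoint]

theorem toMat2_transpose_splitBasePoint_one : toMat2 (splitBasePointᵀ 1) = !![0, 0; 0, 1] := by
  ext i j; fin_cases i <;> fin_cases j <;> simp [toMat2, splitBasePoint]

theorem transpose_mul_splitQuaternary_mul_splitBasePoint :
    splitBasePointᵀ * splitQuaternary * splitBasePoint = splitBinary := by
  rw [transpose_mul_splitQuaternary_mul_eq_splitBinary_iff, toMat2_transpose_splitBasePoint_zero,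
    toMat2_transpose_splitBasePoint_one]
  simp [det_fin_two_of]

theorem exists_mul_splitBasePoint_eq {N : Matrix (Fin 4) (Fin 2) ℝ}
    (hN : Nᵀ * splitQuaternary * N = splitBinary) :
    ∃ g : Matrix (Fin 4) (Fin 4) ℝ, gᵀ * splitQuaternary * g = splitQuaternary ∧ g.det = 1 ∧
      g * splitBasePoint = N := by
  obtain ⟨hU, hV, hUV⟩ := (transpose_mul_splitQuaternary_mul_eq_splitBinary_iff N).1 hN
  obtain ⟨P, Q, hPQ, hPU, hPV⟩ := exists_mul_mul_eq_of_det_eq_zero_of_det_add_eq_one hU hV hUV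
  refine ⟨twistedKronecker P Qᵀ, ?_, ?_, ?_⟩
  · rw [transpose_twistedKronecker_mul_splitQuaternary_mul, det_transpose, hPQ, one_smul]
  · rw [det_twistedKronecker, det_transpose, ← mul_pow, hPQ, one_pow]
  · refine transpose_injective (funext fun j => toMat2_injective ?_)
    rw [transpose_mul, mul_apply_eq_vecMul, vecMul_transpose, toMat2_twistedKronecker_mulVec,
      transpose_transpose]
    match j with
    | 0 => rw [toMat2_transpose_splitBasePoint_zero, hPU]
    | 1 => rw [toMat2_transpose_splitBasePoint_one, hPV]

theorem isSOTransitive_splitQuaternary_splitBinary :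
    IsSOTransitive splitQuaternary splitBinary :=
  .of_forall_exists_mul_eq splitBasePoint fun _ => exists_mul_splitBasePoint_eq

theorem statement5_general (A : Matrix (Fin 2) (Fin 2) ℝ) (B : Matrix (Fin 4) (Fin 4) ℝ)
    (hAeq : MatrixEquiv A splitBinary) (hBeq : MatrixEquiv B splitQuaternary) :
    (∃ M : Matrix (Fin 4) (Fin 2) ℝ, Mᵀ * B * M = A) ∧
    (∀ M M' : Matrix (Fin 4) (Fin 2) ℝ, Mᵀ * B * M = A → M'ᵀ * B * M' = A →
      ∃ g : Matrix (Fin 4) (Fin 4) ℝ, gᵀ * B * g = B ∧ g.det = 1 ∧ g * M = M') := by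
  obtain ⟨P, hP, hA⟩ := hAeq
  obtain ⟨C, hC, hB⟩ := hBeq
  refine ⟨⟨C * splitBasePoint * P⁻¹, transpose_mul_mul_eq_of_congr hP ?_⟩,
    IsSOTransitive.of_congr hC hP ?_⟩
  · rw [← hA, ← hB]
    exact transpose_mul_splitQuaternary_mul_splitBasePoint
  · rw [← hA, ← hB]
    exact isSOTransitive_splitQuaternary_splitBinary

/-- Let `A` be a symmetric `2 × 2` real matrix ℝ-equivalent to the split binary matrix
and `B` a symmetric `4 × 4` real matrix ℝ-equivalent to the split quaternary matrix.
Then `U(ℝ) = {M : MᵀBM = A}` is nonempty and the group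
`SO(B)(ℝ) = {g : gᵀBg = B, det g = 1}` acts transitively on it by left multiplication. -/
theorem statement5 (A : Matrix (Fin 2) (Fin 2) ℝ) (B : Matrix (Fin 4) (Fin 4) ℝ)
    (hA : A.IsSymm) (hB : B.IsSymm)
    (hAeq : MatrixEquiv A splitBinary) (hBeq : MatrixEquiv B splitQuaternary) :
    (∃ M : Matrix (Fin 4) (Fin 2) ℝ, Mᵀ * B * M = A) ∧
    (∀ M M' : Matrix (Fin 4) (Fin 2) ℝ, Mᵀ * B * M = A → M'ᵀ * B * M' = A →
      ∃ g : Matrix (Fin 4) (Fin 4) ℝ, gᵀ * B * g = B ∧ g.det = 1 ∧ g * M = M') :=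
  statement5_general A B hAeq hBeq
end

section
/- X(ℝ) is the disjoint union of the six G-orbits of the points y₀ = ([e₁:1],[e₁:1]), y₁* = ([e₂:0],[e₁:1]), y₁⁰ = ([e₂:0],[0:1]), y₂* = ([e₁:1],[e₂:0]), y₂⁰ = ([0:1],[e₂:0]) and y₁₂ = ([e₁:0],[e₂:0]); that is, these six orbits are pairwise disjoint and their union is all of X(ℝ). -/
open Matrix

noncomputable section

/-- The vector space `ℝ^{n+1} × ℝ`, whose projectivization is `ℙ^{n+1}(ℝ)` with
points written `[v : s]`. -/
abbrev Vn (n : ℕ) := (Fin (n + 1) → ℝ) × ℝ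

/-- The real projective space `ℙ^{n+1}(ℝ)`. -/
abbrev Pt (n : ℕ) := Projectivization ℝ (Vn n)

/-- `X(ℝ) = {([v:s],[α:t]) : ⟨v,α⟩ = s·t} ⊆ ℙ^{n+1}(ℝ) × ℙ^{n+1}(ℝ)`. -/
def XR (n : ℕ) : Set (Pt n × Pt n) :=
  {P | ∃ (x y : Vn n) (hx : x ≠ 0) (hy : y ≠ 0),
    P.1 = Projectivization.mk ℝ x hx ∧ P.2 = Projectivization.mk ℝ y hy ∧
    (∑ i, x.1 i * y.1 i) = x.2 * y.2}

/-- The linear automorphism `(v, s) ↦ (g v, s)` of `ℝ^{n+1} × ℝ`. -/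
def slEquivFst (n : ℕ) (g : Matrix.SpecialLinearGroup (Fin (n + 1)) ℝ) :
    Vn n ≃ₗ[ℝ] Vn n :=
  (Matrix.SpecialLinearGroup.toLin' g).prodCongr (LinearEquiv.refl ℝ ℝ)

/-- The transpose of an element of `SL_{n+1}(ℝ)`. -/
def transposeSL (n : ℕ) (g : Matrix.SpecialLinearGroup (Fin (n + 1)) ℝ) :
    Matrix.SpecialLinearGroup (Fin (n + 1)) ℝ :=
  ⟨(g : Matrix (Fin (n + 1)) (Fin (n + 1)) ℝ)ᵀ, by
    rw [Matrix.det_transpose]; exact g.prop⟩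

/-- The linear automorphism `(α, t) ↦ ((gᵀ)⁻¹ α, t)` of `ℝ^{n+1} × ℝ`. -/
def slEquivSnd (n : ℕ) (g : Matrix.SpecialLinearGroup (Fin (n + 1)) ℝ) :
    Vn n ≃ₗ[ℝ] Vn n :=
  (Matrix.SpecialLinearGroup.toLin' ((transposeSL n g)⁻¹)).prodCongr (LinearEquiv.refl ℝ ℝ)

/-- The action of `G = SL_{n+1}(ℝ)` on `ℙ^{n+1}(ℝ) × ℙ^{n+1}(ℝ)`:
`g·([v:s],[α:t]) = ([gv : s], [(gᵀ)⁻¹α : t])`. -/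
def actP (n : ℕ) (g : Matrix.SpecialLinearGroup (Fin (n + 1)) ℝ) (P : Pt n × Pt n) :
    Pt n × Pt n :=
  (Projectivization.map (slEquivFst n g).toLinearMap
      (fun _ _ h => (slEquivFst n g).injective h) P.1,
   Projectivization.map (slEquivSnd n g).toLinearMap
      (fun _ _ h => (slEquivSnd n g).injective h) P.2)

lemma sndOne_ne (n : ℕ) (v : Fin (n + 1) → ℝ) : (v, (1 : ℝ)) ≠ (0 : Vn n) := by
  intro h
  simpa using congrArg Prod.snd h

lemma single_ne (n : ℕ) (i : Fin (n + 1)) :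
    ((Pi.single i 1 : Fin (n + 1) → ℝ), (0 : ℝ)) ≠ (0 : Vn n) := by
  intro h
  simpa using congrArg (fun p : Vn n => p.1 i) h

/-- The point `[v : 1]`. -/
def ptAffine (n : ℕ) (v : Fin (n + 1) → ℝ) : Pt n :=
  Projectivization.mk ℝ (v, 1) (sndOne_ne n v)

/-- The point `[eᵢ : 0]` (standard basis vector at infinity). -/
def ptInfty (n : ℕ) (i : Fin (n + 1)) : Pt n :=
  Projectivization.mk ℝ (Pi.single i 1, 0) (single_ne n i)

/-- `y₀ = ([e₁:1],[e₁:1])`. -/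
def y0 (n : ℕ) : Pt n × Pt n := (ptAffine n (Pi.single 0 1), ptAffine n (Pi.single 0 1))

/-- `y₁* = ([e₂:0],[e₁:1])`. -/
def y1s (n : ℕ) : Pt n × Pt n := (ptInfty n 1, ptAffine n (Pi.single 0 1))

/-- `y₁⁰ = ([e₂:0],[0:1])`. -/
def y10 (n : ℕ) : Pt n × Pt n := (ptInfty n 1, ptAffine n 0)

/-- `y₂* = ([e₁:1],[e₂:0])`. -/
def y2s (n : ℕ) : Pt n × Pt n := (ptAffine n (Pi.single 0 1), ptInfty n 1)

/-- `y₂⁰ = ([0:1],[e₂:0])`. -/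
def y20 (n : ℕ) : Pt n × Pt n := (ptAffine n 0, ptInfty n 1)

/-- `y₁₂ = ([e₁:0],[e₂:0])`. -/
def y12 (n : ℕ) : Pt n × Pt n := (ptInfty n 0, ptInfty n 1)

/-- The `G`-orbit of a point. -/
def orbitP (n : ℕ) (p : Pt n × Pt n) : Set (Pt n × Pt n) :=
  {q | ∃ g : Matrix.SpecialLinearGroup (Fin (n + 1)) ℝ, q = actP n g p}

/-- The six orbits of the six base points. -/
def orbFam (n : ℕ) : Fin 6 → Set (Pt n × Pt n) :=
  ![orbitP n (y0 n), orbitP n (y1s n), orbitP n (y10 n),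
    orbitP n (y2s n), orbitP n (y20 n), orbitP n (y12 n)]

/-!
The four conditions `s = 0`, `v = 0`, `t = 0`, `α = 0` on a point `([v:s],[α:t])` are
`G`-invariant, and they separate the six base points, so the six orbits are disjoint.

Conversely `G` is transitive on each of the six strata they cut out of `X(ℝ)`. After rescaling,
everything reduces to two facts about pairs `(v, α)`, with `g` acting by `(g v, (gᵀ)⁻¹ α)`:
if `⟨α, v⟩ = 1` then some `g ∈ SL` sends `v` to `e₁` and has first row `α`, i.e. maps the pair
to `(e₁, e₁)`; if `⟨α, v⟩ = 0` with `v, α ≠ 0` then some `g` sends `v` to `e₁` and has second row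
`c • α`, i.e. maps the pair to `(e₁, c⁻¹ e₂)`. Both come from completing `(a, b)` with
`⟨a, v⟩ = 1`, `⟨b, v⟩ = 0` to an invertible matrix, clearing the column `M v` by row operations
with row `a`, and rescaling the second row to get determinant `1`. Exchanging the two factors
intertwines `g` with `(gᵀ)⁻¹` and swaps the strata `s = 0` and `t = 0`.
-/

open scoped MatrixGroups

section LinearAlgebra

variable {K : Type*} [Field K] {ι : Type*} [Fintype ι]

lemma exists_dotProduct_eq_one [DecidableEq ι] {v : ι → K} (hv : v ≠ 0) :
    ∃ a : ι → K, a ⬝ᵥ v = 1 := by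
  obtain ⟨k, hk⟩ := Function.ne_iff.mp hv
  exact ⟨Pi.single k (v k)⁻¹, by simp [single_dotProduct, inv_mul_cancel₀ hk]⟩

lemma linearIndependent_pair_of_dotProduct {a b v : ι → K} (ha : a ⬝ᵥ v = 1)
    (hb : b ⬝ᵥ v = 0) (hb0 : b ≠ 0) : LinearIndependent K ![a, b] := by
  rw [LinearIndependent.pair_iff]
  intro s t hst
  have hs : s = 0 := by
    simpa [add_dotProduct, smul_dotProduct, ha, hb] using congrArg (· ⬝ᵥ v) hst
  subst hs
  exact ⟨rfl, (smul_eq_zero.mp (by simpa using hst)).resolve_right hb0⟩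

lemma exists_linearIndependent_extend_fin {M : Type*} [AddCommGroup M] [Module K M]
    {k : ℕ} {v : Fin k → M} (hv : LinearIndependent K v) {m : ℕ} (hkm : k ≤ m)
    (hm : m ≤ Module.finrank K M) :
    ∃ w : Fin m → M, LinearIndependent K w ∧ ∀ i, w (Fin.castLE hkm i) = v i := by
  induction m, hkm using Nat.le_induction with
  | base => exact ⟨v, hv, fun i => rfl⟩
  | succ m hkm ih =>
    obtain ⟨w, hw, hwv⟩ := ih (by omega)
    obtain ⟨x, hx⟩ := exists_linearIndependent_snoc_of_lt_finrank hw (by omega)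
    exact ⟨Fin.snoc w x, hx, fun i => (Fin.snoc_castSucc (α := fun _ => M) ..).trans (hwv i)⟩

lemma exists_det_ne_zero_row_zero_row_one {n : ℕ} (hn : 1 ≤ n) {a b : Fin (n + 1) → K}
    (hab : LinearIndependent K ![a, b]) :
    ∃ M : Matrix (Fin (n + 1)) (Fin (n + 1)) K, M.det ≠ 0 ∧ M 0 = a ∧ M 1 = b := by
  obtain ⟨w, hw, hwab⟩ :=
    exists_linearIndependent_extend_fin hab (by omega : 2 ≤ n + 1) (by simp)
  refine ⟨Matrix.of w, (Matrix.isUnit_iff_isUnit_det _).mp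
    (Matrix.linearIndependent_rows_iff_isUnit.mp hw) |>.ne_zero, hwab 0, ?_⟩
  have h1 : Fin.castLE (by omega : 2 ≤ n + 1) (1 : Fin 2) = 1 :=
    Fin.ext (by simp [Nat.mod_eq_of_lt (show 1 < n + 1 by omega)])
  exact h1 ▸ hwab 1

lemma exists_det_eq_mulVec_eq_single [DecidableEq ι] (M : Matrix ι ι K) {v : ι → K} {i₀ : ι}
    (h : M i₀ ⬝ᵥ v = 1) :
    ∃ M' : Matrix ι ι K, M'.det = M.det ∧ M' *ᵥ v = Pi.single i₀ 1 ∧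
      ∀ i, M i ⬝ᵥ v = (Pi.single i₀ 1 : ι → K) i → M' i = M i := by
  -- `M' = (1 - w e_{i₀}ᵀ) M` subtracts `w i • M i₀` from each row `M i`; since `w i₀ = 0`, the
  -- matrix determinant lemma gives `det (1 - w e_{i₀}ᵀ) = 1 - w i₀ = 1`.
  set w := M *ᵥ v - Pi.single i₀ 1
  have hw : w i₀ = 0 := by simp [w, mulVec, h]
  refine ⟨(1 - vecMulVec w (Pi.single i₀ 1)) * M, ?_, ?_, ?_⟩
  · rw [det_mul, sub_eq_add_neg, ← vecMulVec_neg, vecMulVec_eq Unit,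
      det_one_add_replicateCol_mul_replicateRow]
    simp [hw]
  · rw [← mulVec_mulVec, sub_mulVec, vecMulVec_mulVec]
    simp [w, h, mulVec]
  · intro i hi
    have : w i = 0 := by simp [w, mulVec, hi]
    ext j
    simp [Matrix.sub_mul, vecMulVec_mul, vecMulVec_apply, this]

lemma exists_SL_of_det_ne_zero [DecidableEq ι] {M : Matrix ι ι K} (hM : M.det ≠ 0) {v : ι → K}
    {i₀ i₁ : ι} (hMv : M *ᵥ v = Pi.single i₀ 1) (hi : i₁ ≠ i₀) :
    ∃ g : SpecialLinearGroup ι K, g *ᵥ v = Pi.single i₀ 1 ∧ (∀ i, i ≠ i₁ → g i = M i) ∧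
      g i₁ = M.det⁻¹ • M i₁ := by
  refine ⟨⟨updateRow M i₁ (M.det⁻¹ • M i₁), ?_⟩, ?_, fun i hi => updateRow_ne hi,
    updateRow_self⟩
  · rw [det_updateRow_smul, updateRow_eq_self, inv_mul_cancel₀ hM]
  · ext i
    by_cases hi₁ : i = i₁
    · subst hi₁
      have hMi : M i ⬝ᵥ v = 0 := by
        have := congrFun hMv i
        rwa [Pi.single_eq_of_ne hi] at this
      show updateRow M i _ i ⬝ᵥ v = _
      rw [updateRow_self, smul_dotProduct, hMi, Pi.single_eq_of_ne hi, smul_zero]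
    · simpa [mulVec, updateRow_ne hi₁] using congrFun hMv i

lemma exists_SL_mulVec_eq_single_zero {n : ℕ} (hn : 1 ≤ n) {a b v : Fin (n + 1) → K}
    (ha : a ⬝ᵥ v = 1) (hb : b ⬝ᵥ v = 0) (hb0 : b ≠ 0) :
    ∃ (g : SpecialLinearGroup (Fin (n + 1)) K) (c : K),
      (g : Matrix (Fin (n + 1)) (Fin (n + 1)) K) *ᵥ v = Pi.single 0 1 ∧ g 0 = a ∧ g 1 = c • b := by
  have : NeZero n := ⟨by omega⟩
  have h10 : (1 : Fin (n + 1)) ≠ 0 := Fin.zero_ne_one'.symm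
  obtain ⟨M, hM, hM0, hM1⟩ :=
    exists_det_ne_zero_row_zero_row_one hn (linearIndependent_pair_of_dotProduct ha hb hb0)
  obtain ⟨M', hdet, hM'v, hrows⟩ := exists_det_eq_mulVec_eq_single M (i₀ := 0) (hM0 ▸ ha)
  obtain ⟨g, hgv, hg, hg1⟩ := exists_SL_of_det_ne_zero (hdet ▸ hM) hM'v h10
  refine ⟨g, M'.det⁻¹, hgv, ?_, ?_⟩
  · rw [hg 0 h10.symm, hrows 0 (by simp [hM0, ha]), hM0]
  · rw [hg1, hrows 1 (by simp [hM1, hb, h10]), hM1]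

lemma exists_SL_mulVec_eq_single_zero_of_dotProduct_eq_one {n : ℕ} (hn : 1 ≤ n)
    {α v : Fin (n + 1) → K} (h : α ⬝ᵥ v = 1) :
    ∃ g : SpecialLinearGroup (Fin (n + 1)) K,
      (g : Matrix (Fin (n + 1)) (Fin (n + 1)) K) *ᵥ v = Pi.single 0 1 ∧ g 0 = α := by
  have : Nontrivial (Fin (n + 1)) := Fin.nontrivial_iff_two_le.mpr (by omega)
  obtain ⟨b, hb0, hb⟩ := exists_ne_zero_dotProduct_eq_zero v
  obtain ⟨g, -, hgv, hg0, -⟩ := exists_SL_mulVec_eq_single_zero hn h hb hb0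
  exact ⟨g, hgv, hg0⟩

lemma exists_SL_mulVec_eq_single_zero_of_dotProduct_eq_zero {n : ℕ} (hn : 1 ≤ n)
    {α v : Fin (n + 1) → K} (hα : α ≠ 0) (hv : v ≠ 0) (h : α ⬝ᵥ v = 0) :
    ∃ (g : SpecialLinearGroup (Fin (n + 1)) K) (c : K),
      (g : Matrix (Fin (n + 1)) (Fin (n + 1)) K) *ᵥ v = Pi.single 0 1 ∧ g 1 = c • α := by
  obtain ⟨a, ha⟩ := exists_dotProduct_eq_one hv
  obtain ⟨g, c, hgv, -, hg1⟩ := exists_SL_mulVec_eq_single_zero hn ha h hα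
  exact ⟨g, c, hgv, hg1⟩

lemma Matrix.SpecialLinearGroup.inv_mulVec_mulVec [DecidableEq ι] (g : SpecialLinearGroup ι K)
    (v : ι → K) :
    ((g⁻¹ : SpecialLinearGroup ι K) : Matrix ι ι K) *ᵥ ((g : Matrix ι ι K) *ᵥ v) = v := by
  rw [mulVec_mulVec, ← SpecialLinearGroup.coe_mul, inv_mul_cancel, SpecialLinearGroup.coe_one,
    one_mulVec]

lemma Matrix.SpecialLinearGroup.mulVec_inv_mulVec [DecidableEq ι] (g : SpecialLinearGroup ι K)
    (v : ι → K) :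
    (g : Matrix ι ι K) *ᵥ (((g⁻¹ : SpecialLinearGroup ι K) : Matrix ι ι K) *ᵥ v) = v := by
  rw [mulVec_mulVec, ← SpecialLinearGroup.coe_mul, mul_inv_cancel, SpecialLinearGroup.coe_one,
    one_mulVec]

lemma Matrix.SpecialLinearGroup.mulVec_eq_zero_iff [DecidableEq ι] (g : SpecialLinearGroup ι K)
    {v : ι → K} : (g : Matrix ι ι K) *ᵥ v = 0 ↔ v = 0 :=
  (toLin' g).map_eq_zero_iff

end LinearAlgebra

section Action

variable {n : ℕ}

local notation:1024 "↑ₘ" A:1024 => ((A : SL(n + 1, ℝ)) : Matrix (Fin (n + 1)) (Fin (n + 1)) ℝ)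

@[simp]
lemma slEquivFst_apply (g : SL(n + 1, ℝ)) (x : Vn n) :
    slEquivFst n g x = (↑ₘg *ᵥ x.1, x.2) := rfl

@[simp]
lemma slEquivSnd_apply (g : SL(n + 1, ℝ)) (x : Vn n) :
    slEquivSnd n g x = (↑ₘ((transposeSL n g)⁻¹) *ᵥ x.1, x.2) := rfl

lemma actP_mk (g : SL(n + 1, ℝ)) {x y : Vn n} (hx : x ≠ 0) (hy : y ≠ 0) :
    actP n g (Projectivization.mk ℝ x hx, Projectivization.mk ℝ y hy) =
      (Projectivization.mk ℝ (slEquivFst n g x) ((slEquivFst n g).map_ne_zero_iff.mpr hx),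
       Projectivization.mk ℝ (slEquivSnd n g y) ((slEquivSnd n g).map_ne_zero_iff.mpr hy)) :=
  rfl

lemma transposeSL_one : transposeSL n 1 = 1 :=
  Subtype.ext transpose_one

lemma transposeSL_mul (g h : SL(n + 1, ℝ)) :
    transposeSL n (g * h) = transposeSL n h * transposeSL n g :=
  Subtype.ext (transpose_mul _ _)

lemma transposeSL_inv (g : SL(n + 1, ℝ)) :
    transposeSL n g⁻¹ = (transposeSL n g)⁻¹ :=
  Subtype.ext (adjugate_transpose ↑ₘg)

lemma transposeSL_transposeSL (g : SL(n + 1, ℝ)) :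
    transposeSL n (transposeSL n g) = g :=
  Subtype.ext (transpose_transpose _)

lemma actP_one (P : Pt n × Pt n) : actP n 1 P = P := by
  obtain ⟨p, q⟩ := P
  induction p using Projectivization.ind
  induction q using Projectivization.ind
  simp [actP_mk, transposeSL_one]

lemma actP_mul (g h : SL(n + 1, ℝ)) (P : Pt n × Pt n) :
    actP n (g * h) P = actP n g (actP n h P) := by
  obtain ⟨p, q⟩ := P
  induction p using Projectivization.ind
  induction q using Projectivization.ind
  simp [actP_mk, transposeSL_mul, mulVec_mulVec]

lemma transposeSL_inv_mulVec_row (g : SL(n + 1, ℝ)) (j : Fin (n + 1)) :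
    ↑ₘ((transposeSL n g)⁻¹) *ᵥ g j = Pi.single j 1 := by
  have hg : g j = ↑ₘ(transposeSL n g) *ᵥ Pi.single j 1 := by
    rw [mulVec_single_one]
    rfl
  rw [hg, SpecialLinearGroup.inv_mulVec_mulVec]

lemma mulVec_dotProduct_transposeSL_inv_mulVec (g : SL(n + 1, ℝ)) (v α : Fin (n + 1) → ℝ) :
    (↑ₘg *ᵥ v) ⬝ᵥ (↑ₘ((transposeSL n g)⁻¹) *ᵥ α) = v ⬝ᵥ α := by
  calc (↑ₘg *ᵥ v) ⬝ᵥ (↑ₘ((transposeSL n g)⁻¹) *ᵥ α)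
      = v ⬝ᵥ (↑ₘ(transposeSL n g) *ᵥ (↑ₘ((transposeSL n g)⁻¹) *ᵥ α)) := by
        rw [dotProduct_mulVec v, ← vecMul_transpose]
        rfl
    _ = v ⬝ᵥ α := by rw [SpecialLinearGroup.mulVec_inv_mulVec]

lemma mem_orbitP_of_actP_eq {g : SL(n + 1, ℝ)} {P Q : Pt n × Pt n} (h : actP n g P = Q) :
    P ∈ orbitP n Q :=
  ⟨g⁻¹, by rw [← h, ← actP_mul, inv_mul_cancel, actP_one]⟩

lemma mk_mem_orbitP_of_smul {x y x' y' : Vn n} {hx : x ≠ 0} {hy : y ≠ 0} {hx' : x' ≠ 0}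
    {hy' : y' ≠ 0} (g : SL(n + 1, ℝ)) {a b : ℝ} (hxa : a • slEquivFst n g x = x')
    (hyb : b • slEquivSnd n g y = y') :
    (Projectivization.mk ℝ x hx, Projectivization.mk ℝ y hy) ∈
      orbitP n (Projectivization.mk ℝ x' hx', Projectivization.mk ℝ y' hy') := by
  refine mem_orbitP_of_actP_eq (g := g) ?_
  rw [actP_mk, Prod.mk.injEq]
  exact ⟨((Projectivization.mk_eq_mk_iff' ℝ _ _ _ _).mpr ⟨a, hxa⟩).symm,
    ((Projectivization.mk_eq_mk_iff' ℝ _ _ _ _).mpr ⟨b, hyb⟩).symm⟩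

lemma actP_swap (g : SL(n + 1, ℝ)) (P : Pt n × Pt n) :
    (actP n g P).swap = actP n (transposeSL n g)⁻¹ P.swap := by
  obtain ⟨p, q⟩ := P
  induction p using Projectivization.ind
  induction q using Projectivization.ind
  simp [actP_mk, transposeSL_inv, transposeSL_transposeSL]

lemma swap_mem_orbitP {P Q : Pt n × Pt n} (h : P ∈ orbitP n Q) : P.swap ∈ orbitP n Q.swap := by
  obtain ⟨g, rfl⟩ := h
  exact ⟨_, actP_swap g Q⟩

end Action

section Invariants

variable {n : ℕ}

def IsAtInfinity (p : Pt n) : Prop :=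
  p.submodule ≤ LinearMap.ker (LinearMap.snd ℝ (Fin (n + 1) → ℝ) ℝ)

def IsOrigin (p : Pt n) : Prop :=
  p.submodule ≤ LinearMap.ker (LinearMap.fst ℝ (Fin (n + 1) → ℝ) ℝ)

@[simp]
lemma isAtInfinity_mk {x : Vn n} (hx : x ≠ 0) :
    IsAtInfinity (Projectivization.mk ℝ x hx) ↔ x.2 = 0 := by
  simp [IsAtInfinity, Projectivization.submodule_mk, Submodule.span_singleton_le_iff_mem]

@[simp]
lemma isOrigin_mk {x : Vn n} (hx : x ≠ 0) :
    IsOrigin (Projectivization.mk ℝ x hx) ↔ x.1 = 0 := by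
  simp [IsOrigin, Projectivization.submodule_mk, Submodule.span_singleton_le_iff_mem]

def orbitType (P : Pt n × Pt n) : Prop × Prop × Prop × Prop :=
  (IsAtInfinity P.1, IsOrigin P.1, IsAtInfinity P.2, IsOrigin P.2)

lemma orbitType_actP (g : SL(n + 1, ℝ)) (P : Pt n × Pt n) :
    orbitType (actP n g P) = orbitType P := by
  obtain ⟨p, q⟩ := P
  induction p using Projectivization.ind
  induction q using Projectivization.ind
  simp only [orbitType, actP_mk, isAtInfinity_mk, isOrigin_mk, slEquivFst_apply, slEquivSnd_apply,
    SpecialLinearGroup.mulVec_eq_zero_iff]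

lemma disjoint_orbitP_of_orbitType_ne {P Q : Pt n × Pt n} (h : orbitType P ≠ orbitType Q) :
    Disjoint (orbitP n P) (orbitP n Q) := by
  refine Set.disjoint_left.mpr fun R ⟨g, hg⟩ ⟨g', hg'⟩ => h ?_
  rw [← orbitType_actP g, ← hg, hg', orbitType_actP]

end Invariants

section Classification

variable {n : ℕ}

lemma mk_mem_XR {x y : Vn n} (hx : x ≠ 0) (hy : y ≠ 0) (h : x.1 ⬝ᵥ y.1 = x.2 * y.2) :
    (Projectivization.mk ℝ x hx, Projectivization.mk ℝ y hy) ∈ XR n :=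
  ⟨x, y, hx, hy, rfl, rfl, h⟩

lemma actP_mem_XR (g : SL(n + 1, ℝ)) {P : Pt n × Pt n} (hP : P ∈ XR n) : actP n g P ∈ XR n := by
  obtain ⟨p, q⟩ := P
  obtain ⟨x, y, hx, hy, rfl, rfl, h⟩ := hP
  rw [actP_mk]
  exact mk_mem_XR _ _ ((mulVec_dotProduct_transposeSL_inv_mulVec g _ _).trans h)

lemma orbitP_subset_XR {P : Pt n × Pt n} (hP : P ∈ XR n) : orbitP n P ⊆ XR n := by
  rintro _ ⟨g, rfl⟩
  exact actP_mem_XR g hP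

lemma swap_mem_XR {P : Pt n × Pt n} (hP : P ∈ XR n) : P.swap ∈ XR n := by
  obtain ⟨x, y, hx, hy, h1, h2, h⟩ := hP
  exact ⟨y, x, hy, hx, h2, h1, by simpa [mul_comm] using h⟩

lemma orbFam_subset_XR (hn : 1 ≤ n) (i : Fin 6) : orbFam n i ⊆ XR n := by
  have : NeZero n := ⟨by omega⟩
  have y0_mem : y0 n ∈ XR n := mk_mem_XR _ _ (by simp)
  have y2s_mem : y2s n ∈ XR n := mk_mem_XR _ _ (by simp)
  have y20_mem : y20 n ∈ XR n := mk_mem_XR _ _ (by simp)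
  have y12_mem : y12 n ∈ XR n := mk_mem_XR _ _ (by simp)
  fin_cases i
  exacts [orbitP_subset_XR y0_mem, orbitP_subset_XR (swap_mem_XR y2s_mem),
    orbitP_subset_XR (swap_mem_XR y20_mem), orbitP_subset_XR y2s_mem, orbitP_subset_XR y20_mem,
    orbitP_subset_XR y12_mem]

lemma mk_mem_orbitP_y0 (hn : 1 ≤ n) {v α : Fin (n + 1) → ℝ} {s t : ℝ} (hx : (v, s) ≠ 0)
    (hy : (α, t) ≠ 0) (hs : s ≠ 0) (ht : t ≠ 0) (h : v ⬝ᵥ α = s * t) :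
    (Projectivization.mk ℝ (v, s) hx, Projectivization.mk ℝ (α, t) hy) ∈ orbitP n (y0 n) := by
  have hdot : (t⁻¹ • α) ⬝ᵥ (s⁻¹ • v) = 1 := by
    rw [smul_dotProduct, dotProduct_smul, dotProduct_comm, h, smul_eq_mul, smul_eq_mul]
    field_simp
  obtain ⟨g, hgv, hg0⟩ := exists_SL_mulVec_eq_single_zero_of_dotProduct_eq_one hn hdot
  refine mk_mem_orbitP_of_smul g (a := s⁻¹) (b := t⁻¹) ?_ ?_
  · simp [← hgv, mulVec_smul, hs]
  · simp [← transposeSL_inv_mulVec_row g 0, hg0, mulVec_smul, ht]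

lemma mk_mem_orbitP_y2s_or_y20 (hn : 1 ≤ n) {v α : Fin (n + 1) → ℝ} {s : ℝ} (hx : (v, s) ≠ 0)
    (hy : (α, (0 : ℝ)) ≠ 0) (hs : s ≠ 0) (h : v ⬝ᵥ α = 0) :
    (Projectivization.mk ℝ (v, s) hx, Projectivization.mk ℝ (α, 0) hy) ∈
      orbitP n (y2s n) ∪ orbitP n (y20 n) := by
  have hα : α ≠ 0 := by simpa using hy
  rcases eq_or_ne v 0 with rfl | hv
  · have : Nontrivial (Fin (n + 1)) := Fin.nontrivial_iff_two_le.mpr (by omega)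
    obtain ⟨w, hw0, hw⟩ := exists_ne_zero_dotProduct_eq_zero α
    obtain ⟨g, c, -, hg1⟩ := exists_SL_mulVec_eq_single_zero_of_dotProduct_eq_zero hn hα hw0
      (by rwa [dotProduct_comm])
    refine Or.inr (mk_mem_orbitP_of_smul g (a := s⁻¹) (b := c) ?_ ?_)
    · simp [hs]
    · simp only [slEquivSnd_apply, Prod.smul_mk, ← mulVec_smul, ← hg1, transposeSL_inv_mulVec_row,
        smul_zero]
  · obtain ⟨g, c, hgv, hg1⟩ := exists_SL_mulVec_eq_single_zero_of_dotProduct_eq_zero hn hα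
      (smul_ne_zero (inv_ne_zero hs) hv) (by rw [dotProduct_smul, dotProduct_comm, h, smul_zero])
    refine Or.inl (mk_mem_orbitP_of_smul g (a := s⁻¹) (b := c) ?_ ?_)
    · simp [← hgv, mulVec_smul, hs]
    · simp only [slEquivSnd_apply, Prod.smul_mk, ← mulVec_smul, ← hg1, transposeSL_inv_mulVec_row,
        smul_zero]

lemma mk_mem_orbitP_y12 (hn : 1 ≤ n) {v α : Fin (n + 1) → ℝ} (hx : (v, (0 : ℝ)) ≠ 0)
    (hy : (α, (0 : ℝ)) ≠ 0) (h : v ⬝ᵥ α = 0) :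
    (Projectivization.mk ℝ (v, 0) hx, Projectivization.mk ℝ (α, 0) hy) ∈ orbitP n (y12 n) := by
  obtain ⟨g, c, hgv, hg1⟩ := exists_SL_mulVec_eq_single_zero_of_dotProduct_eq_zero hn
    (by simpa using hy) (by simpa using hx) (by rwa [dotProduct_comm])
  refine mk_mem_orbitP_of_smul g (a := 1) (b := c) ?_ ?_
  · simp [hgv]
  · simp only [slEquivSnd_apply, Prod.smul_mk, ← mulVec_smul, ← hg1, transposeSL_inv_mulVec_row,
      smul_zero]

lemma exists_mem_orbFam_of_mem_XR (hn : 1 ≤ n) {P : Pt n × Pt n} (hP : P ∈ XR n) :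
    ∃ i, P ∈ orbFam n i := by
  obtain ⟨p, q⟩ := P
  obtain ⟨⟨v, s⟩, ⟨α, t⟩, hx, hy, rfl, rfl, h⟩ := hP
  change v ⬝ᵥ α = s * t at h
  rcases eq_or_ne s 0 with rfl | hs <;> rcases eq_or_ne t 0 with rfl | ht
  · exact ⟨5, mk_mem_orbitP_y12 hn hx hy (by simpa using h)⟩
  · rcases mk_mem_orbitP_y2s_or_y20 hn hy hx ht (by rw [dotProduct_comm, h, zero_mul]) with
      h' | h'
    exacts [⟨1, swap_mem_orbitP h'⟩, ⟨2, swap_mem_orbitP h'⟩]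
  · rcases mk_mem_orbitP_y2s_or_y20 hn hx hy hs (by rw [h, mul_zero]) with h' | h'
    exacts [⟨3, h'⟩, ⟨4, h'⟩]
  · exact ⟨0, mk_mem_orbitP_y0 hn hx hy hs ht h⟩

lemma disjoint_orbFam (i j : Fin 6) (hij : i ≠ j) : Disjoint (orbFam n i) (orbFam n j) := by
  fin_cases i <;> fin_cases j <;> first
    | exact absurd rfl hij
    | exact disjoint_orbitP_of_orbitType_ne
        (by simp [orbitType, y0, y1s, y10, y2s, y20, y12, ptAffine, ptInfty])

end Classification

/-- `X(ℝ)` is the disjoint union of the six `G`-orbits of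
`y₀, y₁*, y₁⁰, y₂*, y₂⁰, y₁₂`. -/
theorem statement6 (n : ℕ) (hn : 1 ≤ n) :
    (⋃ i, orbFam n i) = XR n ∧
    (∀ i j : Fin 6, i ≠ j → Disjoint (orbFam n i) (orbFam n j)) :=
  ⟨(Set.iUnion_subset (orbFam_subset_XR hn)).antisymm fun _ hP =>
      Set.mem_iUnion.mpr (exists_mem_orbFam_of_mem_XR hn hP),
    disjoint_orbFam⟩
end
end

section
/- The subset U(ℝ) := {([v:1],[α:1]) : v, α ∈ ℝ^{n+1} with ⟨v,α⟩ = 1} of X(ℝ) is connected and dense in X(ℝ) with respect to the analytic (Euclidean) topology. -/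
/-!
Away from `s = 0` and `t = 0`, `X(ℝ)` is the affine quadric `{(v, α) : ⟨v, α⟩ = 1}`, which is
connected because it is the image of `(ℝ^{n+1} \ {0}) × ℝ^{n+1}` under the map moving `α` along `v`
onto the hyperplane `⟨v, ·⟩ = 1`; this needs `n + 1 ≥ 2`. For density, a point `([v:s],[α:t])`
of `X(ℝ)` with `v ≠ 0` is the limit of `([v:sₖ],[α + cₖ v:tₖ])` with `sₖ → s`, `tₖ → t` nonzero and
`cₖ = (sₖ tₖ - s t) / ⟨v, v⟩ → 0`; if `v = 0`, then `t = 0` and `α ≠ 0`, and one swaps the factors.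
-/

open Matrix

noncomputable section

/-- The analytic (Euclidean) topology on `ℙ^{n+1}(ℝ)`: the quotient topology of the
Euclidean topology on `(ℝ^{n+1} × ℝ) \ {0}`. -/
instance (n : ℕ) : TopologicalSpace (Pt n) :=
  inferInstanceAs (TopologicalSpace (Quotient (projectivizationSetoid ℝ (Vn n))))

/-- `U(ℝ) = {([v:1],[α:1]) : ⟨v,α⟩ = 1}`. -/
def UR (n : ℕ) : Set (Pt n × Pt n) :=
  {P | ∃ v α : Fin (n + 1) → ℝ, (∑ i, v i * α i) = 1 ∧
    P = (Projectivization.mk ℝ (v, 1) (sndOne_ne n v),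
         Projectivization.mk ℝ (α, 1) (sndOne_ne n α))}

open Filter Topology

lemma isConnected_setOf_dotProduct_eq_one {ι : Type*} [Fintype ι] (hι : 1 < Fintype.card ι) :
    IsConnected {q : (ι → ℝ) × (ι → ℝ) | q.1 ⬝ᵥ q.2 = 1} := by
  set f : (ι → ℝ) × (ι → ℝ) → (ι → ℝ) × (ι → ℝ) :=
    fun q => (q.1, q.2 + ((1 - q.1 ⬝ᵥ q.2) / (q.1 ⬝ᵥ q.1)) • q.1)
  have hvv {v : ι → ℝ} (hv : v ≠ 0) : v ⬝ᵥ v ≠ 0 := dotProduct_self_eq_zero.not.mpr hv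
  have himage : f '' ({0}ᶜ ×ˢ Set.univ) = {q | q.1 ⬝ᵥ q.2 = 1} := by
    ext q
    constructor
    · rintro ⟨⟨v, w⟩, ⟨hv, -⟩, rfl⟩
      simp only [f, Set.mem_ofPred_eq, dotProduct_add, dotProduct_smul, smul_eq_mul]
      field_simp [hvv hv]
      ring
    · obtain ⟨v, α⟩ := q
      intro (h : v ⬝ᵥ α = 1)
      have hv : v ≠ 0 := by rintro rfl; simp at h
      exact ⟨(v, α), ⟨hv, trivial⟩, by simp [f, h]⟩
  rw [← himage]
  refine IsConnected.image ?_ f ?_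
  · refine (isConnected_compl_singleton_of_one_lt_rank ?_ 0).prod isConnected_univ
    rw [rank_fun']
    exact_mod_cast hι
  · refine continuousOn_fst.prodMk
      (continuousOn_snd.add (ContinuousOn.fun_smul ?_ continuousOn_fst))
    exact (continuous_const.sub (continuous_fst.dotProduct continuous_snd)).continuousOn.div
      (continuous_fst.dotProduct continuous_fst).continuousOn fun q hq => hvv hq.1

section

variable {n : ℕ}

lemma continuous_projectivization_mk :
    Continuous fun x : {x : Vn n // x ≠ 0} => Projectivization.mk ℝ x.1 x.2 :=
  continuous_quotient_mk'

lemma tendsto_projectivization_mk {ι : Type*} {l : Filter ι} {x : ι → Vn n} (hx : ∀ k, x k ≠ 0)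
    {x₀ : Vn n} (hx₀ : x₀ ≠ 0) (h : Tendsto x l (𝓝 x₀)) :
    Tendsto (fun k => Projectivization.mk ℝ (x k) (hx k)) l
      (𝓝 (Projectivization.mk ℝ x₀ hx₀)) :=
  (continuous_projectivization_mk.tendsto ⟨x₀, hx₀⟩).comp
    (tendsto_subtype_rng.mpr h : Tendsto (fun k => (⟨x k, hx k⟩ : {x : Vn n // x ≠ 0})) l _)

variable (n) in
def mkOne (v : Fin (n + 1) → ℝ) : Pt n := Projectivization.mk ℝ (v, 1) (sndOne_ne n v)

lemma continuous_mkOne : Continuous (mkOne n) :=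
  continuous_projectivization_mk.comp
    ((continuous_id.prodMk continuous_const).subtype_mk (sndOne_ne n))

lemma mk_eq_mkOne {x : Vn n} (hx : x ≠ 0) (hs : x.2 ≠ 0) :
    Projectivization.mk ℝ x hx = mkOne n (x.2⁻¹ • x.1) := by
  refine (Projectivization.mk_eq_mk_iff' ℝ _ _ _ _).mpr ⟨x.2, ?_⟩
  ext <;> simp [hs]

lemma UR_eq_image :
    UR n = (fun q : (Fin (n + 1) → ℝ) × (Fin (n + 1) → ℝ) => (mkOne n q.1, mkOne n q.2)) ''
      {q | q.1 ⬝ᵥ q.2 = 1} := by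
  ext p
  constructor
  · rintro ⟨v, α, h, rfl⟩
    exact ⟨(v, α), h, rfl⟩
  · rintro ⟨⟨v, α⟩, h, rfl⟩
    exact ⟨v, α, h, rfl⟩

lemma isConnected_UR (hn : 1 ≤ n) : IsConnected (UR n) := by
  rw [UR_eq_image]
  refine (isConnected_setOf_dotProduct_eq_one ?_).image _ ?_
  · simp only [Fintype.card_fin]
    omega
  · exact ((continuous_mkOne.comp continuous_fst).prodMk
      (continuous_mkOne.comp continuous_snd)).continuousOn

lemma UR_subset_XR : UR n ⊆ XR n := by
  rintro p ⟨v, α, h, rfl⟩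
  exact ⟨(v, 1), (α, 1), sndOne_ne n v, sndOne_ne n α, rfl, rfl, by simpa using h⟩

lemma mk_mem_UR {x y : Vn n} (hx : x ≠ 0) (hy : y ≠ 0) (hs : x.2 ≠ 0) (ht : y.2 ≠ 0)
    (hxy : x.1 ⬝ᵥ y.1 = x.2 * y.2) :
    (Projectivization.mk ℝ x hx, Projectivization.mk ℝ y hy) ∈ UR n := by
  refine ⟨x.2⁻¹ • x.1, y.2⁻¹ • y.1, ?_, by rw [mk_eq_mkOne hx hs, mk_eq_mkOne hy ht]; rfl⟩
  change (x.2⁻¹ • x.1) ⬝ᵥ (y.2⁻¹ • y.1) = 1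
  rw [smul_dotProduct, dotProduct_smul, hxy, smul_eq_mul, smul_eq_mul]
  field_simp

lemma mk_mem_closure_UR_of_tendsto {x y : ℕ → Vn n} (hs : ∀ k, (x k).2 ≠ 0)
    (ht : ∀ k, (y k).2 ≠ 0) (hxy : ∀ k, (x k).1 ⬝ᵥ (y k).1 = (x k).2 * (y k).2)
    {x₀ y₀ : Vn n} (hx₀ : x₀ ≠ 0) (hy₀ : y₀ ≠ 0) (hx : Tendsto x atTop (𝓝 x₀))
    (hy : Tendsto y atTop (𝓝 y₀)) :
    (Projectivization.mk ℝ x₀ hx₀, Projectivization.mk ℝ y₀ hy₀) ∈ closure (UR n) := by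
  have hx0 (k : ℕ) : x k ≠ 0 := fun h => hs k (by simp [h])
  have hy0 (k : ℕ) : y k ≠ 0 := fun h => ht k (by simp [h])
  exact mem_closure_of_tendsto
    ((tendsto_projectivization_mk hx0 hx₀ hx).prodMk_nhds
      (tendsto_projectivization_mk hy0 hy₀ hy))
    (Eventually.of_forall fun k => mk_mem_UR (hx0 k) (hy0 k) (hs k) (ht k) (hxy k))

lemma exists_seq_ne_zero_tendsto (s : ℝ) : ∃ u : ℕ → ℝ, (∀ k, u k ≠ 0) ∧ Tendsto u atTop (𝓝 s) :=
  mem_closure_iff_seq_limit.mp (by rw [closure_compl_singleton (0 : ℝ)]; trivial)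

lemma mk_mem_closure_UR_of_fst_ne_zero {x y : Vn n} (hx : x ≠ 0) (hy : y ≠ 0) (hv : x.1 ≠ 0)
    (hxy : x.1 ⬝ᵥ y.1 = x.2 * y.2) :
    (Projectivization.mk ℝ x hx, Projectivization.mk ℝ y hy) ∈ closure (UR n) := by
  obtain ⟨v, s⟩ := x
  obtain ⟨α, t⟩ := y
  obtain ⟨sₖ, hsₖ, hsₖs⟩ := exists_seq_ne_zero_tendsto s
  obtain ⟨tₖ, htₖ, htₖt⟩ := exists_seq_ne_zero_tendsto t
  have hvv : v ⬝ᵥ v ≠ 0 := dotProduct_self_eq_zero.not.mpr hv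
  set c : ℕ → ℝ := fun k => (sₖ k * tₖ k - s * t) / (v ⬝ᵥ v)
  have hc : Tendsto c atTop (𝓝 0) := by
    simpa using ((hsₖs.mul htₖt).sub_const (s * t)).div_const (v ⬝ᵥ v)
  refine mk_mem_closure_UR_of_tendsto (x := fun k => (v, sₖ k))
    (y := fun k => (α + c k • v, tₖ k)) hsₖ htₖ (fun k => ?_) hx hy
    (tendsto_const_nhds.prodMk_nhds hsₖs) ?_
  · simp only [dotProduct_add, dotProduct_smul, smul_eq_mul, c]
    rw [← hxy]
    field_simp
    ring
  · simpa using (tendsto_const_nhds.add (hc.smul_const v)).prodMk_nhds htₖt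

lemma swap_mem_UR {p : Pt n × Pt n} (hp : p ∈ UR n) : p.swap ∈ UR n := by
  obtain ⟨v, α, h, rfl⟩ := hp
  exact ⟨α, v, by simpa [mul_comm] using h, rfl⟩

lemma mem_closure_UR_of_swap {p : Pt n × Pt n} (hp : p.swap ∈ closure (UR n)) :
    p ∈ closure (UR n) :=
  map_mem_closure continuous_swap hp fun _ => swap_mem_UR

lemma XR_subset_closure_UR : XR n ⊆ closure (UR n) := by
  rintro p ⟨x, y, hx, hy, hp₁, hp₂, hxy⟩
  obtain ⟨p₁, p₂⟩ := p
  obtain rfl : p₁ = _ := hp₁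
  obtain rfl : p₂ = _ := hp₂
  by_cases hv : x.1 = 0
  · have hs : x.2 ≠ 0 := fun hs => hx (Prod.ext hv hs)
    have ht : y.2 = 0 := by simpa [hv, hs] using hxy.symm
    have hα : y.1 ≠ 0 := fun hα => hy (Prod.ext hα ht)
    exact mem_closure_UR_of_swap <| mk_mem_closure_UR_of_fst_ne_zero hy hx hα (by simp [hv, ht])
  · exact mk_mem_closure_UR_of_fst_ne_zero hx hy hv hxy

end

/-- `U(ℝ)` is a connected subset of `X(ℝ)` which is dense in `X(ℝ)` for the analytic
(Euclidean) topology. -/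
theorem statement7 (n : ℕ) (hn : 1 ≤ n) :
    UR n ⊆ XR n ∧ IsConnected (UR n) ∧ XR n ⊆ closure (UR n) :=
  ⟨UR_subset_XR, isConnected_UR hn, XR_subset_closure_UR⟩

end
end

section
/- X^{INC}(ℝ) is the disjoint union of the four G-orbits G·o, G·x₂, G·x₃, G·x₄ and the set D¹ ∪ D²; that is, these five sets are pairwise disjoint and their union is all of X^{INC}(ℝ). -/
open Matrix

noncomputable section

/-- A sextuple `(L₁, L₂, L₃, P₁₂, P₁₃, P₂₃)` of linear subspaces of `ℝ³`. -/
structure TriangleConfig where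
  L1 : Submodule ℝ (Fin 3 → ℝ)
  L2 : Submodule ℝ (Fin 3 → ℝ)
  L3 : Submodule ℝ (Fin 3 → ℝ)
  P12 : Submodule ℝ (Fin 3 → ℝ)
  P13 : Submodule ℝ (Fin 3 → ℝ)
  P23 : Submodule ℝ (Fin 3 → ℝ)

/-- The incidence variety `X^{INC}(ℝ)`: each `Lᵢ` is a line, each `P_{ij}` is a plane,
and `Lᵢ, Lⱼ ⊆ P_{ij}`. -/
def XINC : Set TriangleConfig :=
  {c | Module.finrank ℝ c.L1 = 1 ∧ Module.finrank ℝ c.L2 = 1 ∧ Module.finrank ℝ c.L3 = 1 ∧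
       Module.finrank ℝ c.P12 = 2 ∧ Module.finrank ℝ c.P13 = 2 ∧ Module.finrank ℝ c.P23 = 2 ∧
       c.L1 ≤ c.P12 ∧ c.L2 ≤ c.P12 ∧ c.L1 ≤ c.P13 ∧ c.L3 ≤ c.P13 ∧
       c.L2 ≤ c.P23 ∧ c.L3 ≤ c.P23}

/-- The coordinatewise action of `G = SL₃(ℝ)` on sextuples of subspaces. -/
def actC (g : Matrix.SpecialLinearGroup (Fin 3) ℝ) (c : TriangleConfig) : TriangleConfig :=
  ⟨c.L1.map (Matrix.toLin' (g : Matrix (Fin 3) (Fin 3) ℝ)),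
   c.L2.map (Matrix.toLin' (g : Matrix (Fin 3) (Fin 3) ℝ)),
   c.L3.map (Matrix.toLin' (g : Matrix (Fin 3) (Fin 3) ℝ)),
   c.P12.map (Matrix.toLin' (g : Matrix (Fin 3) (Fin 3) ℝ)),
   c.P13.map (Matrix.toLin' (g : Matrix (Fin 3) (Fin 3) ℝ)),
   c.P23.map (Matrix.toLin' (g : Matrix (Fin 3) (Fin 3) ℝ))⟩

/-- The `G`-orbit of a configuration. -/
def orbitC (c : TriangleConfig) : Set TriangleConfig :=
  {c' | ∃ g : Matrix.SpecialLinearGroup (Fin 3) ℝ, c' = actC g c}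

/-- The line `ℝ·v`. -/
def sp (v : Fin 3 → ℝ) : Submodule ℝ (Fin 3 → ℝ) := Submodule.span ℝ {v}

/-- The span `⟨v, w⟩`. -/
def sp2 (v w : Fin 3 → ℝ) : Submodule ℝ (Fin 3 → ℝ) := Submodule.span ℝ {v, w}

/-- Standard basis vector. -/
def sbv (i : Fin 3) : Fin 3 → ℝ := Pi.single i 1

/-- `o = (ℝe₁, ℝe₂, ℝe₃, ⟨e₁,e₂⟩, ⟨e₁,e₃⟩, ⟨e₂,e₃⟩)`. -/
def basePt : TriangleConfig :=
  ⟨sp (sbv 0), sp (sbv 1), sp (sbv 2),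
   sp2 (sbv 0) (sbv 1), sp2 (sbv 0) (sbv 2), sp2 (sbv 1) (sbv 2)⟩

/-- `x₂ = (ℝe₁, ℝe₁, ℝe₃, ⟨e₁,e₂⟩, ⟨e₁,e₃⟩, ⟨e₁,e₃⟩)`. -/
def basePt2 : TriangleConfig :=
  ⟨sp (sbv 0), sp (sbv 0), sp (sbv 2),
   sp2 (sbv 0) (sbv 1), sp2 (sbv 0) (sbv 2), sp2 (sbv 0) (sbv 2)⟩

/-- `x₃ = (ℝe₁, ℝe₂, ℝe₁, ⟨e₁,e₂⟩, ⟨e₁,e₃⟩, ⟨e₁,e₂⟩)`. -/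
def basePt3 : TriangleConfig :=
  ⟨sp (sbv 0), sp (sbv 1), sp (sbv 0),
   sp2 (sbv 0) (sbv 1), sp2 (sbv 0) (sbv 2), sp2 (sbv 0) (sbv 1)⟩

/-- `x₄ = (ℝe₁, ℝe₂, ℝe₂, ⟨e₁,e₂⟩, ⟨e₁,e₂⟩, ⟨e₂,e₃⟩)`. -/
def basePt4 : TriangleConfig :=
  ⟨sp (sbv 0), sp (sbv 1), sp (sbv 1),
   sp2 (sbv 0) (sbv 1), sp2 (sbv 0) (sbv 1), sp2 (sbv 1) (sbv 2)⟩

/-- `D¹ = {x ∈ X^{INC}(ℝ) : L₁ = L₂ = L₃}`. -/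
def D1 : Set TriangleConfig := {c ∈ XINC | c.L1 = c.L2 ∧ c.L2 = c.L3}

/-- `D² = {x ∈ X^{INC}(ℝ) : P₁₂ = P₁₃ = P₂₃}`. -/
def D2 : Set TriangleConfig := {c ∈ XINC | c.P12 = c.P13 ∧ c.P13 = c.P23}

/-- The five sets: the four orbits `G·o`, `G·x₂`, `G·x₃`, `G·x₄` and `D¹ ∪ D²`. -/
def pieces : Fin 5 → Set TriangleConfig :=
  ![orbitC basePt, orbitC basePt2, orbitC basePt3, orbitC basePt4, D1 ∪ D2]

/-!
Two distinct lines span a plane, and a plane together with a line outside it spans `ℝ³`. Hence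
the incidence conditions force `P_{ij} = Lᵢ ⊔ Lⱼ` whenever `Lᵢ ≠ Lⱼ`. Off `D¹ ∪ D²`, a case
analysis on which lines coincide shows that the configuration is built from three lines spanning
`ℝ³` by the recipe that builds `o`, `x₂`, `x₃` or `x₄` from the coordinate axes; when two lines
coincide, the third line is taken in the remaining plane, off the other planes. As `SL₃(ℝ)` maps
the coordinate axes to any three lines spanning `ℝ³` (rescale one basis vector to get determinant
`1`), the configuration lies in the corresponding orbit. Conversely, which of the six subspaces
coincide is `SL₃(ℝ)`-invariant, and this pattern separates the five pieces.
-/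

open Module Submodule

section Lines

variable {K V : Type*} [DivisionRing K] [AddCommGroup V] [Module K V] [FiniteDimensional K V]
  {A B M P : Submodule K V}

lemma finrank_sup_eq_two (hA : finrank K A = 1) (hB : finrank K B = 1) (hAB : A ≠ B) :
    finrank K ↥(A ⊔ B) = 2 := by
  have hBA : ¬ B ≤ A := fun h => hAB (eq_of_le_of_finrank_eq h (hB.trans hA.symm)).symm
  have hlt := finrank_lt_finrank_of_lt (left_lt_sup.2 hBA)
  have hle := finrank_add_le_finrank_add_finrank A B
  omega

lemma sup_eq_of_finrank_eq_two (hA : finrank K A = 1) (hB : finrank K B = 1) (hAB : A ≠ B)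
    (hP : finrank K P = 2) (hAP : A ≤ P) (hBP : B ≤ P) : A ⊔ B = P :=
  eq_of_le_of_finrank_eq (sup_le hAP hBP) ((finrank_sup_eq_two hA hB hAB).trans hP.symm)

lemma sup_eq_top_of_not_le (hP : finrank K P + 1 = finrank K V) (hM : ¬ M ≤ P) : P ⊔ M = ⊤ := by
  have hlt := finrank_lt_finrank_of_lt (left_lt_sup.2 hM)
  exact eq_top_of_finrank_eq (le_antisymm (finrank_le _) (by omega))

lemma exists_line_sup_eq_of_ne {R : Submodule K V} (hA : finrank K A = 1) (hP : finrank K P = 2)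
    (hR : finrank K R = 2) (hAP : A ≤ P) (hAR : A ≤ R) (hRP : R ≠ P) :
    ∃ M : Submodule K V, finrank K M = 1 ∧ ¬ M ≤ P ∧ A ⊔ M = R := by
  obtain ⟨v, hvR, hvP⟩ := SetLike.not_le_iff_exists.1 fun h =>
    hRP (eq_of_le_of_finrank_eq h (hR.trans hP.symm))
  have hv : v ≠ 0 := fun h => hvP (h ▸ P.zero_mem)
  have hMP : ¬ (K ∙ v) ≤ P := by rwa [span_singleton_le_iff_mem]
  refine ⟨K ∙ v, finrank_span_singleton hv, hMP, ?_⟩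
  exact sup_eq_of_finrank_eq_two hA (finrank_span_singleton hv) (fun h => hMP (h ▸ hAP)) hR hAR
    ((span_singleton_le_iff_mem v R).2 hvR)

end Lines

lemma exists_specialLinearGroup_map_span_single {K : Type*} [Field K] {n : ℕ} [NeZero n]
    {L : Fin n → Submodule K (Fin n → K)} (hL : ∀ i, finrank K (L i) = 1) (hspan : ⨆ i, L i = ⊤) :
    ∃ g : SpecialLinearGroup (Fin n) K,
      ∀ i, (K ∙ Pi.single i 1).map (toLin' (g : Matrix (Fin n) (Fin n) K)) = L i := by
  have hgen : ∀ i, ∃ v, v ≠ 0 ∧ L i = K ∙ v := fun i => by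
    obtain ⟨v, hv, hv0⟩ := exists_mem_ne_zero_of_ne_bot
      (isAtom_iff_finrank_eq_one.2 (hL i)).ne_bot
    exact ⟨v, hv0, eq_span_singleton_of_mem_of_finrank_eq_one (hL i) hv hv0⟩
  choose u hu0 hu using hgen
  have hind : LinearIndependent K u :=
    linearIndependent_of_top_le_span_of_card_eq_finrank
      (by rw [span_range_eq_iSup, ← hspan]; simp [hu]) (by simp)
  have hdet : (of u).det ≠ 0 :=
    ((isUnit_iff_isUnit_det _).1 (linearIndependent_rows_iff_isUnit.1 hind)).ne_zero
  set w : Fin n → K := Pi.mulSingle 0 (of u).det⁻¹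
  have hw : ∀ i, w i ≠ 0 := fun i => by
    by_cases h : i = 0 <;> simp [w, h, hdet]
  have hg : (of fun i j => w i * of u i j)ᵀ.det = 1 := by
    rw [det_transpose, det_mul_column, Finset.prod_pi_mulSingle']
    simp [hdet]
  refine ⟨⟨_, hg⟩, fun i => ?_⟩
  rw [map_span, Set.image_singleton, toLin'_apply, mulVec_single_one, col_transpose, hu]
  show K ∙ (w i • u i) = K ∙ u i
  exact span_singleton_smul_eq (hw i).isUnit (u i)

lemma sp2_eq_sup (v w : Fin 3 → ℝ) : sp2 v w = sp v ⊔ sp w :=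
  span_insert v {w}

lemma sp_le_sp2_left (v w : Fin 3 → ℝ) : sp v ≤ sp2 v w := sp2_eq_sup v w ▸ le_sup_left

lemma sp_le_sp2_right (v w : Fin 3 → ℝ) : sp w ≤ sp2 v w := sp2_eq_sup v w ▸ le_sup_right

lemma finrank_sp_sbv (i : Fin 3) : finrank ℝ (sp (sbv i)) = 1 :=
  finrank_span_singleton (by simp [sbv])

lemma sbv_notMem_sp2 {i j k : Fin 3} (hi : k ≠ i) (hj : k ≠ j) : sbv k ∉ sp2 (sbv i) (sbv j) := by
  rw [sp2, mem_span_pair]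
  rintro ⟨a, b, hab⟩
  simpa [sbv, hi, hj] using congr_fun hab k

lemma sp_sbv_ne {i j : Fin 3} (hij : i ≠ j) : sp (sbv i) ≠ sp (sbv j) := fun h =>
  sbv_notMem_sp2 hij.symm hij.symm <|
    sp_le_sp2_left (sbv i) (sbv i) (h ▸ mem_span_singleton_self (sbv j) : sbv j ∈ sp (sbv i))

lemma sp2_sbv_ne {i j k l : Fin 3} (hi : k ≠ i) (hj : k ≠ j) :
    sp2 (sbv i) (sbv j) ≠ sp2 (sbv l) (sbv k) := fun h =>
  sbv_notMem_sp2 hi hj (h ▸ subset_span (by simp))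

lemma finrank_sp2_sbv {i j : Fin 3} (hij : i ≠ j) : finrank ℝ (sp2 (sbv i) (sbv j)) = 2 := by
  rw [sp2_eq_sup]
  exact finrank_sup_eq_two (finrank_sp_sbv i) (finrank_sp_sbv j) (sp_sbv_ne hij)

lemma sup_eq_top_of_finrank_eq_two {P M : Submodule ℝ (Fin 3 → ℝ)} (hP : finrank ℝ P = 2)
    (hM : ¬ M ≤ P) : P ⊔ M = ⊤ :=
  sup_eq_top_of_not_le (by rw [hP, finrank_fin_fun]) hM

lemma finrank_map_toLin' {K : Type*} [Field K] {n : ℕ} (g : SpecialLinearGroup (Fin n) K)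
    (p : Submodule K (Fin n → K)) :
    finrank K (p.map (toLin' (g : Matrix (Fin n) (Fin n) K))) = finrank K p :=
  LinearEquiv.finrank_map_eq (SpecialLinearGroup.toLin' g) p

lemma actC_mem_XINC (g : SpecialLinearGroup (Fin 3) ℝ) {c : TriangleConfig} (hc : c ∈ XINC) :
    actC g c ∈ XINC := by
  obtain ⟨h₁, h₂, h₃, h₁₂, h₁₃, h₂₃, h₁', h₂', h₃', h₄', h₅', h₆'⟩ := hc
  exact ⟨(finrank_map_toLin' g _).trans h₁, (finrank_map_toLin' g _).trans h₂,
    (finrank_map_toLin' g _).trans h₃, (finrank_map_toLin' g _).trans h₁₂,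
    (finrank_map_toLin' g _).trans h₁₃, (finrank_map_toLin' g _).trans h₂₃, map_mono h₁',
    map_mono h₂', map_mono h₃', map_mono h₄', map_mono h₅', map_mono h₆'⟩

lemma orbitC_subset_XINC {b : TriangleConfig} (hb : b ∈ XINC) : orbitC b ⊆ XINC := by
  rintro _ ⟨g, rfl⟩
  exact actC_mem_XINC g hb

lemma basePt_mem_XINC : basePt ∈ XINC :=
  ⟨finrank_sp_sbv 0, finrank_sp_sbv 1, finrank_sp_sbv 2, finrank_sp2_sbv (by decide),
    finrank_sp2_sbv (by decide), finrank_sp2_sbv (by decide), sp_le_sp2_left _ _,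
    sp_le_sp2_right _ _, sp_le_sp2_left _ _, sp_le_sp2_right _ _, sp_le_sp2_left _ _,
    sp_le_sp2_right _ _⟩

lemma basePt2_mem_XINC : basePt2 ∈ XINC :=
  ⟨finrank_sp_sbv 0, finrank_sp_sbv 0, finrank_sp_sbv 2, finrank_sp2_sbv (by decide),
    finrank_sp2_sbv (by decide), finrank_sp2_sbv (by decide), sp_le_sp2_left _ _,
    sp_le_sp2_left _ _, sp_le_sp2_left _ _, sp_le_sp2_right _ _, sp_le_sp2_left _ _,
    sp_le_sp2_right _ _⟩

lemma basePt3_mem_XINC : basePt3 ∈ XINC :=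
  ⟨finrank_sp_sbv 0, finrank_sp_sbv 1, finrank_sp_sbv 0, finrank_sp2_sbv (by decide),
    finrank_sp2_sbv (by decide), finrank_sp2_sbv (by decide), sp_le_sp2_left _ _,
    sp_le_sp2_right _ _, sp_le_sp2_left _ _, sp_le_sp2_left _ _, sp_le_sp2_right _ _,
    sp_le_sp2_left _ _⟩

lemma basePt4_mem_XINC : basePt4 ∈ XINC :=
  ⟨finrank_sp_sbv 0, finrank_sp_sbv 1, finrank_sp_sbv 1, finrank_sp2_sbv (by decide),
    finrank_sp2_sbv (by decide), finrank_sp2_sbv (by decide), sp_le_sp2_left _ _,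
    sp_le_sp2_right _ _, sp_le_sp2_left _ _, sp_le_sp2_right _ _, sp_le_sp2_left _ _,
    sp_le_sp2_left _ _⟩

lemma iUnion_pieces_subset_XINC : ⋃ i, pieces i ⊆ XINC := by
  refine Set.iUnion_subset fun i => ?_
  fin_cases i
  exacts [orbitC_subset_XINC basePt_mem_XINC, orbitC_subset_XINC basePt2_mem_XINC,
    orbitC_subset_XINC basePt3_mem_XINC, orbitC_subset_XINC basePt4_mem_XINC,
    Set.union_subset (fun _ h => h.1) (fun _ h => h.1)]

lemma exists_map_sp_sbv {L₀ L₁ L₂ : Submodule ℝ (Fin 3 → ℝ)} (h₀ : finrank ℝ L₀ = 1)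
    (h₁ : finrank ℝ L₁ = 1) (h₂ : finrank ℝ L₂ = 1) (htop : L₀ ⊔ L₁ ⊔ L₂ = ⊤) :
    ∃ g : SpecialLinearGroup (Fin 3) ℝ,
      (sp (sbv 0)).map (toLin' (g : Matrix (Fin 3) (Fin 3) ℝ)) = L₀ ∧
      (sp (sbv 1)).map (toLin' (g : Matrix (Fin 3) (Fin 3) ℝ)) = L₁ ∧
      (sp (sbv 2)).map (toLin' (g : Matrix (Fin 3) (Fin 3) ℝ)) = L₂ := by
  obtain ⟨g, hg⟩ := exists_specialLinearGroup_map_span_single (L := ![L₀, L₁, L₂])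
    (fun i => by fin_cases i <;> assumption) (by simpa using htop)
  exact ⟨g, hg 0, hg 1, hg 2⟩

section Orbits

variable {A B M : Submodule ℝ (Fin 3 → ℝ)}

lemma mk_mem_orbitC_basePt (hA : finrank ℝ A = 1) (hB : finrank ℝ B = 1) (hM : finrank ℝ M = 1)
    (htop : A ⊔ B ⊔ M = ⊤) :
    (⟨A, B, M, A ⊔ B, A ⊔ M, B ⊔ M⟩ : TriangleConfig) ∈ orbitC basePt := by
  obtain ⟨g, h₀, h₁, h₂⟩ := exists_map_sp_sbv hA hB hM htop
  exact ⟨g, by simp [actC, basePt, sp2_eq_sup, h₀, h₁, h₂]⟩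

lemma mk_mem_orbitC_basePt2 (hA : finrank ℝ A = 1) (hB : finrank ℝ B = 1) (hM : finrank ℝ M = 1)
    (htop : A ⊔ B ⊔ M = ⊤) :
    (⟨A, A, B, A ⊔ M, A ⊔ B, A ⊔ B⟩ : TriangleConfig) ∈ orbitC basePt2 := by
  obtain ⟨g, h₀, h₁, h₂⟩ := exists_map_sp_sbv hA hM hB (by rwa [sup_right_comm])
  exact ⟨g, by simp [actC, basePt2, sp2_eq_sup, h₀, h₁, h₂]⟩

lemma mk_mem_orbitC_basePt3 (hA : finrank ℝ A = 1) (hB : finrank ℝ B = 1) (hM : finrank ℝ M = 1)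
    (htop : A ⊔ B ⊔ M = ⊤) :
    (⟨A, B, A, A ⊔ B, A ⊔ M, A ⊔ B⟩ : TriangleConfig) ∈ orbitC basePt3 := by
  obtain ⟨g, h₀, h₁, h₂⟩ := exists_map_sp_sbv hA hB hM htop
  exact ⟨g, by simp [actC, basePt3, sp2_eq_sup, h₀, h₁, h₂]⟩

lemma mk_mem_orbitC_basePt4 (hA : finrank ℝ A = 1) (hB : finrank ℝ B = 1) (hM : finrank ℝ M = 1)
    (htop : A ⊔ B ⊔ M = ⊤) :
    (⟨A, B, B, A ⊔ B, A ⊔ B, B ⊔ M⟩ : TriangleConfig) ∈ orbitC basePt4 := by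
  obtain ⟨g, h₀, h₁, h₂⟩ := exists_map_sp_sbv hA hB hM htop
  exact ⟨g, by simp [actC, basePt4, sp2_eq_sup, h₀, h₁, h₂]⟩

end Orbits

lemma mem_orbitC_basePt_or_D2 {c : TriangleConfig} (hc : c ∈ XINC) (h₁₂ : c.L1 ≠ c.L2)
    (h₁₃ : c.L1 ≠ c.L3) (h₂₃ : c.L2 ≠ c.L3) : c ∈ orbitC basePt ∨ c ∈ D2 := by
  obtain ⟨L₁, L₂, L₃, P₁₂, P₁₃, P₂₃⟩ := c
  obtain ⟨hL₁, hL₂, hL₃, hP₁₂, hP₁₃, hP₂₃, h₁P₁₂, h₂P₁₂, h₁P₁₃, h₃P₁₃, h₂P₂₃, h₃P₂₃⟩ := id hc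
  dsimp only at *
  obtain rfl := sup_eq_of_finrank_eq_two hL₁ hL₂ h₁₂ hP₁₂ h₁P₁₂ h₂P₁₂
  obtain rfl := sup_eq_of_finrank_eq_two hL₁ hL₃ h₁₃ hP₁₃ h₁P₁₃ h₃P₁₃
  obtain rfl := sup_eq_of_finrank_eq_two hL₂ hL₃ h₂₃ hP₂₃ h₂P₂₃ h₃P₂₃
  by_cases hL₃P : L₃ ≤ L₁ ⊔ L₂
  · have e₁₃ := sup_eq_of_finrank_eq_two hL₁ hL₃ h₁₃ hP₁₂ le_sup_left hL₃P
    have e₂₃ := sup_eq_of_finrank_eq_two hL₂ hL₃ h₂₃ hP₁₂ le_sup_right hL₃P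
    exact .inr ⟨hc, e₁₃.symm, e₁₃.trans e₂₃.symm⟩
  · exact .inl (mk_mem_orbitC_basePt hL₁ hL₂ hL₃
      (sup_eq_top_of_finrank_eq_two hP₁₂ hL₃P))

lemma mem_orbitC_basePt2_or_D2 {c : TriangleConfig} (hc : c ∈ XINC) (h₁₂ : c.L1 = c.L2)
    (h₁₃ : c.L1 ≠ c.L3) : c ∈ orbitC basePt2 ∨ c ∈ D2 := by
  obtain ⟨L₁, L₂, L₃, P₁₂, P₁₃, P₂₃⟩ := c
  obtain ⟨hL₁, -, hL₃, hP₁₂, hP₁₃, hP₂₃, h₁P₁₂, -, h₁P₁₃, h₃P₁₃, h₂P₂₃, h₃P₂₃⟩ := id hc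
  dsimp only at *
  obtain rfl : L₁ = L₂ := h₁₂
  obtain rfl := sup_eq_of_finrank_eq_two hL₁ hL₃ h₁₃ hP₁₃ h₁P₁₃ h₃P₁₃
  obtain rfl := sup_eq_of_finrank_eq_two hL₁ hL₃ h₁₃ hP₂₃ h₂P₂₃ h₃P₂₃
  by_cases hP : P₁₂ = L₁ ⊔ L₃
  · exact .inr ⟨hc, hP, rfl⟩
  · obtain ⟨M, hM, hMP, rfl⟩ := exists_line_sup_eq_of_ne hL₁ hP₁₃ hP₁₂ le_sup_left h₁P₁₂ hP
    exact .inl (mk_mem_orbitC_basePt2 hL₁ hL₃ hM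
      (sup_eq_top_of_finrank_eq_two hP₁₃ hMP))

lemma mem_orbitC_basePt3_or_D2 {c : TriangleConfig} (hc : c ∈ XINC) (h₁₂ : c.L1 ≠ c.L2)
    (h₁₃ : c.L1 = c.L3) : c ∈ orbitC basePt3 ∨ c ∈ D2 := by
  obtain ⟨L₁, L₂, L₃, P₁₂, P₁₃, P₂₃⟩ := c
  obtain ⟨hL₁, hL₂, -, hP₁₂, hP₁₃, hP₂₃, h₁P₁₂, h₂P₁₂, h₁P₁₃, -, h₂P₂₃, h₃P₂₃⟩ := id hc
  dsimp only at *
  obtain rfl : L₁ = L₃ := h₁₃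
  obtain rfl := sup_eq_of_finrank_eq_two hL₁ hL₂ h₁₂ hP₁₂ h₁P₁₂ h₂P₁₂
  obtain rfl := sup_eq_of_finrank_eq_two hL₁ hL₂ h₁₂ hP₂₃ h₃P₂₃ h₂P₂₃
  by_cases hP : P₁₃ = L₁ ⊔ L₂
  · exact .inr ⟨hc, hP.symm, hP⟩
  · obtain ⟨M, hM, hMP, rfl⟩ := exists_line_sup_eq_of_ne hL₁ hP₁₂ hP₁₃ le_sup_left h₁P₁₃ hP
    exact .inl (mk_mem_orbitC_basePt3 hL₁ hL₂ hM
      (sup_eq_top_of_finrank_eq_two hP₁₂ hMP))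

lemma mem_orbitC_basePt4_or_D2 {c : TriangleConfig} (hc : c ∈ XINC) (h₁₂ : c.L1 ≠ c.L2)
    (h₂₃ : c.L2 = c.L3) : c ∈ orbitC basePt4 ∨ c ∈ D2 := by
  obtain ⟨L₁, L₂, L₃, P₁₂, P₁₃, P₂₃⟩ := c
  obtain ⟨hL₁, hL₂, -, hP₁₂, hP₁₃, hP₂₃, h₁P₁₂, h₂P₁₂, h₁P₁₃, h₃P₁₃, h₂P₂₃, -⟩ := id hc
  dsimp only at *
  obtain rfl : L₂ = L₃ := h₂₃
  obtain rfl := sup_eq_of_finrank_eq_two hL₁ hL₂ h₁₂ hP₁₂ h₁P₁₂ h₂P₁₂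
  obtain rfl := sup_eq_of_finrank_eq_two hL₁ hL₂ h₁₂ hP₁₃ h₁P₁₃ h₃P₁₃
  by_cases hP : P₂₃ = L₁ ⊔ L₂
  · exact .inr ⟨hc, rfl, hP.symm⟩
  · obtain ⟨M, hM, hMP, rfl⟩ := exists_line_sup_eq_of_ne hL₂ hP₁₂ hP₂₃ le_sup_right h₂P₂₃ hP
    exact .inl (mk_mem_orbitC_basePt4 hL₁ hL₂ hM
      (sup_eq_top_of_finrank_eq_two hP₁₂ hMP))

lemma mem_iUnion_pieces {c : TriangleConfig} (hc : c ∈ XINC) : c ∈ ⋃ i, pieces i := by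
  rw [Set.mem_iUnion]
  by_cases h₁₂ : c.L1 = c.L2
  · by_cases h₂₃ : c.L2 = c.L3
    · exact ⟨4, .inl ⟨hc, h₁₂, h₂₃⟩⟩
    · rcases mem_orbitC_basePt2_or_D2 hc h₁₂ (h₁₂ ▸ h₂₃) with h | h
      exacts [⟨1, h⟩, ⟨4, .inr h⟩]
  by_cases h₁₃ : c.L1 = c.L3
  · rcases mem_orbitC_basePt3_or_D2 hc h₁₂ h₁₃ with h | h
    exacts [⟨2, h⟩, ⟨4, .inr h⟩]
  by_cases h₂₃ : c.L2 = c.L3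
  · rcases mem_orbitC_basePt4_or_D2 hc h₁₂ h₂₃ with h | h
    exacts [⟨3, h⟩, ⟨4, .inr h⟩]
  · rcases mem_orbitC_basePt_or_D2 hc h₁₂ h₁₃ h₂₃ with h | h
    exacts [⟨0, h⟩, ⟨4, .inr h⟩]

def TriangleConfig.component (c : TriangleConfig) : Fin 6 → Submodule ℝ (Fin 3 → ℝ) :=
  ![c.L1, c.L2, c.L3, c.P12, c.P13, c.P23]

lemma component_actC (g : SpecialLinearGroup (Fin 3) ℝ) (c : TriangleConfig) (k : Fin 6) :
    (actC g c).component k = (c.component k).map (toLin' (g : Matrix (Fin 3) (Fin 3) ℝ)) := by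
  fin_cases k <;> rfl

lemma component_eq_iff_of_mem_orbitC {b c : TriangleConfig} (hc : c ∈ orbitC b) (k l : Fin 6) :
    c.component k = c.component l ↔ b.component k = b.component l := by
  obtain ⟨g, rfl⟩ := hc
  rw [component_actC, component_actC]
  exact (map_injective_of_injective (SpecialLinearGroup.toLin' g).injective).eq_iff

lemma disjoint_orbitC {b b' : TriangleConfig} {k l : Fin 6}
    (h : b.component k ≠ b.component l) (h' : b'.component k = b'.component l) :
    Disjoint (orbitC b) (orbitC b') :=
  Set.disjoint_left.2 fun _ hc hc' =>
    h ((component_eq_iff_of_mem_orbitC hc k l).1 ((component_eq_iff_of_mem_orbitC hc' k l).2 h'))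

lemma disjoint_orbitC_D1_union_D2 {b : TriangleConfig} (hL : b.L1 ≠ b.L2 ∨ b.L2 ≠ b.L3)
    (hP : b.P12 ≠ b.P13 ∨ b.P13 ≠ b.P23) : Disjoint (orbitC b) (D1 ∪ D2) := by
  refine Set.disjoint_left.2 fun c hc hD => ?_
  have key := component_eq_iff_of_mem_orbitC hc
  rcases hD with ⟨-, h₁₂, h₂₃⟩ | ⟨-, h₁₂, h₂₃⟩
  · exact hL.elim (· ((key 0 1).1 h₁₂)) (· ((key 1 2).1 h₂₃))
  · exact hP.elim (· ((key 3 4).1 h₁₂)) (· ((key 4 5).1 h₂₃))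

lemma pieces_disjoint {i j : Fin 5} (hij : i ≠ j) : Disjoint (pieces i) (pieces j) := by
  have h₁₂ : Disjoint (orbitC basePt) (orbitC basePt2) :=
    disjoint_orbitC (k := 0) (l := 1) (sp_sbv_ne (by decide)) rfl
  have h₁₃ : Disjoint (orbitC basePt) (orbitC basePt3) :=
    disjoint_orbitC (k := 0) (l := 2) (sp_sbv_ne (by decide)) rfl
  have h₁₄ : Disjoint (orbitC basePt) (orbitC basePt4) :=
    disjoint_orbitC (k := 1) (l := 2) (sp_sbv_ne (by decide)) rfl
  have h₃₂ : Disjoint (orbitC basePt3) (orbitC basePt2) :=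
    disjoint_orbitC (k := 0) (l := 1) (sp_sbv_ne (by decide)) rfl
  have h₄₂ : Disjoint (orbitC basePt4) (orbitC basePt2) :=
    disjoint_orbitC (k := 0) (l := 1) (sp_sbv_ne (by decide)) rfl
  have h₄₃ : Disjoint (orbitC basePt4) (orbitC basePt3) :=
    disjoint_orbitC (k := 0) (l := 2) (sp_sbv_ne (by decide)) rfl
  have h₁D : Disjoint (orbitC basePt) (D1 ∪ D2) :=
    disjoint_orbitC_D1_union_D2 (.inl (sp_sbv_ne (by decide)))
      (.inl (sp2_sbv_ne (k := 2) (by decide) (by decide)))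
  have h₂D : Disjoint (orbitC basePt2) (D1 ∪ D2) :=
    disjoint_orbitC_D1_union_D2 (.inr (sp_sbv_ne (by decide)))
      (.inl (sp2_sbv_ne (k := 2) (by decide) (by decide)))
  have h₃D : Disjoint (orbitC basePt3) (D1 ∪ D2) :=
    disjoint_orbitC_D1_union_D2 (.inl (sp_sbv_ne (by decide)))
      (.inl (sp2_sbv_ne (k := 2) (by decide) (by decide)))
  have h₄D : Disjoint (orbitC basePt4) (D1 ∪ D2) :=
    disjoint_orbitC_D1_union_D2 (.inl (sp_sbv_ne (by decide)))
      (.inr (sp2_sbv_ne (k := 2) (by decide) (by decide)))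
  fin_cases i <;> fin_cases j <;>
    first | exact absurd rfl hij | assumption | exact Disjoint.symm ‹_›

/-- `X^{INC}(ℝ)` is the disjoint union of the four orbits `G·o`, `G·x₂`, `G·x₃`, `G·x₄`
and the set `D¹ ∪ D²`. -/
theorem statement8 :
    (⋃ i, pieces i) = XINC ∧
    (∀ i j : Fin 5, i ≠ j → Disjoint (pieces i) (pieces j)) :=
  ⟨iUnion_pieces_subset_XINC.antisymm fun _ => mem_iUnion_pieces, fun _ _ => pieces_disjoint⟩

end
end

section
/- In the polynomial ring ℂ[x, y, w, a, b] in five variables over ℂ, the ideal I generated by the two polynomials xy − w² and xa + yb is a prime ideal. -/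
/-!
Parametrize the cone `x y = w²` by `x = s², y = t², w = s t`. This map `param` has kernel
`(x y - w²)`: modulo `x y - w²` every polynomial has `w`-degree at most one, and on such
polynomials `param` is injective on monomials. Its image consists of the polynomials invariant
under `(s, t) ↦ (-s, -t)`. If `param f = g · (s² a + t² b)`, then `g` is invariant too, so
`g = param f'` and `f - f' (x a + y b)` lies in the kernel. Hence the ideal is the preimage under
`param` of the principal ideal of `s² a + t² b`, which is prime: as a polynomial in `a` it is
linear with coprime coefficients `s²` and `t² b`.
-/

open MvPolynomial

namespace MvPolynomial

variable {σ τ R : Type*}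

section CommSemiring

variable [CommSemiring R]

theorem coeff_apply_of_map_monomial {F : Type*} [FunLike F (MvPolynomial σ R) (MvPolynomial τ R)]
    [AddMonoidHomClass F (MvPolynomial σ R) (MvPolynomial τ R)] {φ : F}
    {T : (σ →₀ ℕ) → τ →₀ ℕ} (hφ : ∀ m c, φ (monomial m c) = monomial (T m) c)
    {s : Set (σ →₀ ℕ)} (hT : s.InjOn T) {p : MvPolynomial σ R} (hp : p ∈ restrictSupport R s)
    {m : σ →₀ ℕ} (hm : m ∈ s) : coeff (T m) (φ p) = coeff m p := by
  classical
  conv_lhs => rw [← p.support_sum_monomial_coeff, map_sum]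
  simp only [coeff_sum, hφ, coeff_monomial]
  rw [Finset.sum_eq_single m]
  · simp
  · exact fun b hb hbm => if_neg fun h => hbm (hT (hp hb) hm h)
  · intro hm'
    simp [notMem_support_iff.mp hm']

theorem eq_zero_of_map_monomial_of_injOn {F : Type*}
    [FunLike F (MvPolynomial σ R) (MvPolynomial τ R)]
    [AddMonoidHomClass F (MvPolynomial σ R) (MvPolynomial τ R)] {φ : F}
    {T : (σ →₀ ℕ) → τ →₀ ℕ} (hφ : ∀ m c, φ (monomial m c) = monomial (T m) c)
    {s : Set (σ →₀ ℕ)} (hT : s.InjOn T) {p : MvPolynomial σ R} (hp : p ∈ restrictSupport R s)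
    (h : φ p = 0) : p = 0 := by
  ext m
  by_cases hm : m ∈ p.support
  · rw [← coeff_apply_of_map_monomial hφ hT hp (hp hm), h, coeff_zero, coeff_zero]
  · simpa using hm

theorem aeval_C_mul_X_monomial (u : σ → R) (m : σ →₀ ℕ) (c : R) :
    aeval (fun i => C (u i) * X i) (monomial m c) =
      monomial m ((m.prod fun i k => u i ^ k) * c) := by
  rw [aeval_monomial, monomial_eq]
  simp only [mul_pow, Finsupp.prod_mul, ← map_pow, ← map_finsuppProd, algebraMap_eq, C_mul]
  ring

theorem coeff_aeval_C_mul_X (u : σ → R) (p : MvPolynomial σ R) (m : σ →₀ ℕ) :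
    coeff m (aeval (fun i => C (u i) * X i) p) = (m.prod fun i k => u i ^ k) * coeff m p := by
  classical
  induction p using induction_on' with
  | monomial e c =>
    rw [aeval_C_mul_X_monomial, coeff_monomial, coeff_monomial]
    split_ifs with h
    · rw [h]
    · rw [mul_zero]
  | add p q hp hq => rw [map_add, coeff_add, coeff_add, hp, hq, mul_add]

end CommSemiring

theorem exists_sub_mem_span_monomial_sub_X_sq [CommRing R] {k : σ} {d : σ →₀ ℕ} (hd : d k = 0)
    (p : MvPolynomial σ R) :
    ∃ g ∈ restrictSupport R {m | m k ≤ 1}, p - g ∈ Ideal.span {monomial d 1 - X k ^ 2} := by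
  induction p using induction_on' with
  | monomial m c =>
    induction hn : m k using Nat.strong_induction_on generalizing m with
    | _ n ih =>
    by_cases hm : m k ≤ 1
    · exact ⟨monomial m c, (monomial_mem_restrictSupport R).mpr (.inl hm), by simp⟩
    obtain ⟨m', rfl⟩ : ∃ m', m = m' + Finsupp.single k 2 :=
      ⟨m - Finsupp.single k 2, (tsub_add_cancel_of_le (by simpa using by omega)).symm⟩
    obtain ⟨g, hg, hmg⟩ := ih ((m' + d) k) (by simp [hd] at hn ⊢; omega) (m' + d) rfl
    refine ⟨g, hg, ?_⟩
    have : monomial (m' + Finsupp.single k 2) c - g =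
        (monomial (m' + d) c - g) - monomial m' c * (monomial d 1 - X k ^ 2) := by
      rw [X_pow_eq_monomial, mul_sub, monomial_mul, monomial_mul, mul_one]
      ring
    rw [this]
    exact sub_mem hmg (Ideal.mul_mem_left _ _ (Ideal.subset_span rfl))
  | add p q hp hq =>
    obtain ⟨g, hg, hpg⟩ := hp
    obtain ⟨h, hh, hqh⟩ := hq
    exact ⟨g + h, add_mem hg hh, by simpa only [add_sub_add_comm] using add_mem hpg hqh⟩

end MvPolynomial

namespace QuadricCone

variable (R : Type*) [CommRing R]

/- Upstairs `x, y, w, a, b` are `X 0, …, X 4`; downstairs `a, s, t, b` are `X 0, …, X 3`, with `a`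
first so that `finSuccEquiv` exhibits `s² a + t² b` as a linear polynomial in `a`. -/
noncomputable def param : MvPolynomial (Fin 5) R →ₐ[R] MvPolynomial (Fin 4) R :=
  aeval ![X 1 ^ 2, X 2 ^ 2, X 1 * X 2, X 0, X 3]

noncomputable def paramExp (m : Fin 5 →₀ ℕ) : Fin 4 →₀ ℕ :=
  Finsupp.equivFunOnFinite.symm ![m 3, 2 * m 0 + m 2, 2 * m 1 + m 2, m 4]

noncomputable def negST : MvPolynomial (Fin 4) R →ₐ[R] MvPolynomial (Fin 4) R :=
  aeval fun i => C (![1, -1, -1, 1] i) * X i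

variable {R}

theorem param_monomial (m : Fin 5 →₀ ℕ) (c : R) :
    param R (monomial m c) = monomial (paramExp m) c := by
  rw [param, aeval_monomial, monomial_eq, Finsupp.prod_fintype _ _ (fun _ => pow_zero _),
    Finsupp.prod_fintype _ _ (fun _ => pow_zero _), Fin.prod_univ_five, Fin.prod_univ_four]
  simp only [paramExp, Finsupp.equivFunOnFinite_symm_apply_apply, algebraMap_eq,
    Matrix.cons_val_zero, Matrix.cons_val_one, Matrix.cons_val]
  ring

theorem paramExp_injOn : Set.InjOn paramExp {m | m 2 ≤ 1} := by
  intro m hm m' hm' h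
  have h0 := DFunLike.congr_fun h 0
  have h1 := DFunLike.congr_fun h 1
  have h2 := DFunLike.congr_fun h 2
  have h3 := DFunLike.congr_fun h 3
  simp only [paramExp, Finsupp.equivFunOnFinite_symm_apply_apply, Matrix.cons_val_zero,
    Matrix.cons_val_one, Matrix.cons_val] at h0 h1 h2 h3
  simp only [Set.mem_ofPred_eq] at hm hm'
  ext i
  fin_cases i <;> simp <;> omega

theorem exists_paramExp_eq {e : Fin 4 →₀ ℕ} (he : Even (e 1 + e 2)) : ∃ m, paramExp m = e := by
  refine ⟨Finsupp.equivFunOnFinite.symm ![e 1 / 2, e 2 / 2, e 1 % 2, e 0, e 3], ?_⟩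
  obtain ⟨k, hk⟩ := he
  ext i
  fin_cases i <;> simp [paramExp] <;> omega

theorem param_quadric : param R (X 0 * X 1 - X 2 ^ 2) = 0 := by
  simp only [param, map_sub, map_mul, map_pow, aeval_X, Matrix.cons_val_zero,
    Matrix.cons_val_one, Matrix.cons_val]
  ring

theorem param_bilinear : param R (X 0 * X 3 + X 1 * X 4) = X 1 ^ 2 * X 0 + X 2 ^ 2 * X 3 := by
  simp [param]

theorem ker_param : RingHom.ker (param R) = Ideal.span {X 0 * X 1 - X 2 ^ 2} := by
  have hle : Ideal.span {X 0 * X 1 - X 2 ^ 2} ≤ RingHom.ker (param R) := by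
    rw [Ideal.span_le, Set.singleton_subset_iff]
    exact RingHom.mem_ker.mpr param_quadric
  refine le_antisymm (fun f hf => ?_) hle
  obtain ⟨g, hg, hfg⟩ := exists_sub_mem_span_monomial_sub_X_sq (R := R) (k := 2)
    (d := Finsupp.single 0 1 + Finsupp.single 1 1) (by simp) f
  rw [← one_mul (1 : R), ← monomial_mul, ← X, ← X] at hfg
  have hg0 : param R g = 0 := by
    have := hle hfg
    rwa [RingHom.mem_ker, map_sub, RingHom.mem_ker.mp hf, zero_sub, neg_eq_zero] at this
  simpa [eq_zero_of_map_monomial_of_injOn param_monomial paramExp_injOn hg hg0] using hfg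

theorem coeff_negST (e : Fin 4 →₀ ℕ) (g : MvPolynomial (Fin 4) R) :
    coeff e (negST R g) = (-1) ^ (e 1 + e 2) * coeff e g := by
  rw [negST, coeff_aeval_C_mul_X, Finsupp.prod_fintype _ _ (fun _ => pow_zero _),
    Fin.prod_univ_four]
  simp [pow_add]

theorem negST_comp_param : (negST R).comp (param R) = param R := by
  ext i
  fin_cases i <;> simp [negST, param]

theorem mem_range_param_of_negST_eq [NoZeroDivisors R] [NeZero (2 : R)] {g : MvPolynomial (Fin 4) R}
    (hg : negST R g = g) : g ∈ (param R).range := by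
  rw [← g.support_sum_monomial_coeff]
  refine Subalgebra.sum_mem _ fun e he => ?_
  have heven : Even (e 1 + e 2) := by
    by_contra hodd
    have h := coeff_negST e g
    rw [hg, (Nat.not_even_iff_odd.mp hodd).neg_one_pow] at h
    have h2 : (2 : R) * coeff e g = 0 := by linear_combination h
    exact mem_support_iff.mp he ((mul_eq_zero.mp h2).resolve_left two_ne_zero)
  obtain ⟨m, rfl⟩ := exists_paramExp_eq heven
  exact ⟨monomial m _, param_monomial m _⟩

variable (K : Type*) [Field K]

theorem prime_sq_mul_add_sq_mul :
    Prime (X 1 ^ 2 * X 0 + X 2 ^ 2 * X 3 : MvPolynomial (Fin 4) K) := by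
  have hX0 : Prime (X 0 : MvPolynomial (Fin 3) K) := X_prime
  have hrel : IsRelPrime (X 0 ^ 2 : MvPolynomial (Fin 3) K) (X 1 ^ 2 * X 2) := by
    refine IsRelPrime.pow_left (hX0.irreducible.isRelPrime_iff_not_dvd.mpr fun h => ?_)
    rcases hX0.dvd_mul.mp h with h | h
    · exact absurd (X_dvd_X.mp (hX0.dvd_of_dvd_pow h)) (by decide)
    · exact absurd (X_dvd_X.mp h) (by decide)
  have hlin : finSuccEquiv K 3 (X 1 ^ 2 * X 0 + X 2 ^ 2 * X 3) =
      Polynomial.C (X 0 ^ 2) * Polynomial.X + Polynomial.C (X 1 ^ 2 * X 2) := by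
    rw [show (1 : Fin 4) = Fin.succ 0 from rfl, show (2 : Fin 4) = Fin.succ 1 from rfl,
      show (3 : Fin 4) = Fin.succ 2 from rfl]
    simp only [map_add, map_mul, map_pow, finSuccEquiv_X_zero, finSuccEquiv_X_succ]
  rw [← MulEquiv.prime_iff (finSuccEquiv K 3).toMulEquiv]
  exact hlin ▸ (Polynomial.irreducible_C_mul_X_add_C (pow_ne_zero 2 (X_ne_zero 0)) hrel).prime

theorem span_eq_comap_param [NeZero (2 : K)] :
    (Ideal.span {X 0 * X 1 - X 2 ^ 2, X 0 * X 3 + X 1 * X 4} : Ideal (MvPolynomial (Fin 5) K)) =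
      (Ideal.span {X 1 ^ 2 * X 0 + X 2 ^ 2 * X 3}).comap (param K) := by
  refine le_antisymm ?_ fun f hf => ?_
  · rw [Ideal.span_le]
    rintro _ (rfl | rfl)
    · rw [SetLike.mem_coe, Ideal.mem_comap, param_quadric]
      exact zero_mem _
    · rw [SetLike.mem_coe, Ideal.mem_comap, param_bilinear]
      exact Ideal.mem_span_singleton_self _
  obtain ⟨g, hg⟩ := Ideal.mem_span_singleton'.mp (Ideal.mem_comap.mp hf)
  have hinv : negST K g = g := by
    have h := congrArg (negST K) hg
    rw [← AlgHom.comp_apply, negST_comp_param, map_mul, ← param_bilinear, ← AlgHom.comp_apply,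
      negST_comp_param, param_bilinear] at h
    exact mul_right_cancel₀ (prime_sq_mul_add_sq_mul K).ne_zero (h.trans hg.symm)
  obtain ⟨f', rfl⟩ := (AlgHom.mem_range _).mp (mem_range_param_of_negST_eq hinv)
  have hker : f - f' * (X 0 * X 3 + X 1 * X 4) ∈ RingHom.ker (param K) := by
    rw [RingHom.mem_ker, map_sub, map_mul, param_bilinear, ← hg, sub_self]
  rw [ker_param] at hker
  obtain ⟨c, hc⟩ := Ideal.mem_span_singleton'.mp hker
  exact Ideal.mem_span_pair.mpr ⟨c, f', by rw [hc, sub_add_cancel]⟩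

end QuadricCone

/-- In the polynomial ring `ℂ[x, y, w, a, b]` (variables indexed by `Fin 5`:
`x = X 0`, `y = X 1`, `w = X 2`, `a = X 3`, `b = X 4`), the ideal generated by
`x*y - w^2` and `x*a + y*b` is prime. -/
theorem statement9 :
    (Ideal.span {(X 0 * X 1 - X 2 ^ 2 : MvPolynomial (Fin 5) ℂ),
                 (X 0 * X 3 + X 1 * X 4 : MvPolynomial (Fin 5) ℂ)}).IsPrime := by
  have hprime := QuadricCone.prime_sq_mul_add_sq_mul ℂ
  have := (Ideal.span_singleton_prime hprime.ne_zero).mpr hprime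
  rw [QuadricCone.span_eq_comap_param]
  exact Ideal.IsPrime.comap _
end

section
/- Let I be the ideal of ℂ[x, y, w, a, b] generated by xy − w² and xa + yb. Then the image of the variable x in the quotient ring ℂ[x, y, w, a, b]/I is not a zero divisor; equivalently, for every φ ∈ ℂ[x, y, w, a, b], if x·φ ∈ I then φ ∈ I. -/
/-!
Write `f = xy - w²`, `g = xa + yb` and suppose `xφ = pf + qg`. Setting `x = 0` gives
`w² p₀ = yb q₀` for the reductions `p₀, q₀` of `p, q`; as `w` is prime and does not divide
`yb`, this forces `p₀ = yb r` and `q₀ = w² r`. Since `yb f + w² g = x (y g - a f)`, the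
identity `xφ = pf + qg` becomes divisible by `x`, and cancelling `x` exhibits `φ ∈ (f, g)`.
-/

open MvPolynomial

theorem exists_eq_mul_of_pow_mul_eq_mul {M : Type*} [CommMonoidWithZero M] [IsCancelMulZero M]
    {p a b c : M} (hp : Prime p) (n : ℕ) (ha : ¬p ∣ a) (h : p ^ n * b = a * c) :
    ∃ r, b = a * r ∧ c = p ^ n * r := by
  obtain ⟨r, rfl⟩ := hp.pow_dvd_of_dvd_mul_left n ha ⟨b, h.symm⟩
  refine ⟨r, mul_left_cancel₀ (pow_ne_zero n hp.ne_zero) ?_, rfl⟩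
  rw [h, mul_left_comm]

namespace MvPolynomial

variable {σ R : Type*} [CommRing R] [DecidableEq σ]

theorem X_dvd_sub_bind₁_update_X_zero (i : σ) (f : MvPolynomial σ R) :
    X i ∣ f - bind₁ (Function.update X i 0) f := by
  rw [← Ideal.mem_span_singleton, ← Ideal.Quotient.eq, ← Ideal.Quotient.mkₐ_eq_mk R,
    ← AlgHom.comp_apply]
  congr 1
  refine algHom_ext fun j => ?_
  obtain rfl | hj := eq_or_ne j i
  · simp
  · simp [Function.update_of_ne hj]

end MvPolynomial

/-- Let `I` be the ideal of `ℂ[x, y, w, a, b]` (variables indexed by `Fin 5`: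
`x = X 0`, `y = X 1`, `w = X 2`, `a = X 3`, `b = X 4`) generated by `x*y - w^2` and
`x*a + y*b`.  Then the image of `x` in the quotient ring is not a zero divisor:
for every polynomial `φ`, if `x * φ ∈ I` then `φ ∈ I`. -/
theorem statement10 (φ : MvPolynomial (Fin 5) ℂ)
    (h : (X 0 : MvPolynomial (Fin 5) ℂ) * φ ∈
      Ideal.span {(X 0 * X 1 - X 2 ^ 2 : MvPolynomial (Fin 5) ℂ),
                  (X 0 * X 3 + X 1 * X 4 : MvPolynomial (Fin 5) ℂ)}) :
    φ ∈ Ideal.span {(X 0 * X 1 - X 2 ^ 2 : MvPolynomial (Fin 5) ℂ),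
                    (X 0 * X 3 + X 1 * X 4 : MvPolynomial (Fin 5) ℂ)} := by
  rw [Ideal.mem_span_pair] at h ⊢
  obtain ⟨p, q, hpq⟩ := h
  set ε := bind₁ (R := ℂ) (Function.update (X : Fin 5 → MvPolynomial (Fin 5) ℂ) 0 0)
  have hε : X 2 ^ 2 * ε p = X 1 * X 4 * ε q := by
    have := congrArg ε hpq
    simp only [ε, map_add, map_sub, map_mul, map_pow, bind₁_X_right, Function.update_self,
      Function.update_of_ne, ne_eq, Fin.reduceEq, not_false_eq_true, zero_mul] at this
    linear_combination -this
  have hw : ¬(X 2 : MvPolynomial (Fin 5) ℂ) ∣ X 1 * X 4 := by simp [X_dvd_mul_iff]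
  obtain ⟨r, hp₀, hq₀⟩ := exists_eq_mul_of_pow_mul_eq_mul X_prime 2 hw hε
  obtain ⟨p₁, hp₁⟩ := X_dvd_sub_bind₁_update_X_zero 0 p
  obtain ⟨q₁, hq₁⟩ := X_dvd_sub_bind₁_update_X_zero 0 q
  refine ⟨p₁ - X 3 * r, q₁ + X 1 * r, mul_left_cancel₀ (X_ne_zero 0) ?_⟩
  linear_combination hpq - (X 0 * X 1 - X 2 ^ 2) * (hp₁ + hp₀)
    - (X 0 * X 3 + X 1 * X 4) * (hq₁ + hq₀)
end

section
/- In the polynomial ring ℝ[λ, β₁, β₂, y₁, y₂, α, x] in seven variables over ℝ, the ideal generated by the two polynomials β₂y₂ − λ² and β₂y₁ + β₁y₂ is a prime ideal. -/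
/-!
Invert `y₂`. The two relations then solve for `β₂ = λ²/y₂` and `β₁ = -λ²y₁/y₂²`, so the ideal is
the kernel of the substitution of these values into the fraction field of `ℝ[λ, y₁, y₂, α, x]`,
provided `y₂` is a nonzerodivisor modulo the ideal. That holds because setting `y₂ = 0` turns
the generators into `-λ²` and `β₂y₁`, which are coprime.
-/

open MvPolynomial

section PowMulModIdeal

variable {A R : Type*} [CommSemiring A] [CommRing R] [Algebra A R]

theorem exists_pow_mul_sub_mem_of_mem_adjoin {I : Ideal R} {B : Subalgebra A R} {s : R}
    (hs : s ∈ B) {S : Set R} (hS : ∀ x ∈ S, ∃ n : ℕ, ∃ b ∈ B, s ^ n * x - b ∈ I) {p : R}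
    (hp : p ∈ Algebra.adjoin A S) : ∃ n : ℕ, ∃ b ∈ B, s ^ n * p - b ∈ I := by
  induction hp using Algebra.adjoin_induction with
  | mem x hx => exact hS x hx
  | algebraMap r => exact ⟨0, algebraMap A R r, B.algebraMap_mem r, by simp⟩
  | add x y _ _ hx hy =>
    obtain ⟨n, b, hb, hxb⟩ := hx
    obtain ⟨m, c, hc, hyc⟩ := hy
    refine ⟨n + m, s ^ m * b + s ^ n * c,
      add_mem (mul_mem (pow_mem hs m) hb) (mul_mem (pow_mem hs n) hc), ?_⟩
    have h : s ^ (n + m) * (x + y) - (s ^ m * b + s ^ n * c) =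
        s ^ m * (s ^ n * x - b) + s ^ n * (s ^ m * y - c) := by ring
    rw [h]
    exact add_mem (I.mul_mem_left _ hxb) (I.mul_mem_left _ hyc)
  | mul x y _ _ hx hy =>
    obtain ⟨n, b, hb, hxb⟩ := hx
    obtain ⟨m, c, hc, hyc⟩ := hy
    refine ⟨n + m, b * c, mul_mem hb hc, ?_⟩
    have h : s ^ (n + m) * (x * y) - b * c =
        s ^ m * y * (s ^ n * x - b) + b * (s ^ m * y - c) := by ring
    rw [h]
    exact add_mem (I.mul_mem_left _ hxb) (I.mul_mem_left _ hyc)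

end PowMulModIdeal

theorem MvPolynomial.X_dvd_sub_aeval_update_zero {σ R : Type*} [CommRing R] [DecidableEq σ]
    (i : σ) (p : MvPolynomial σ R) : X i ∣ p - aeval (Function.update X i 0) p := by
  rw [← Ideal.mem_span_singleton, ← Ideal.Quotient.eq]
  have h : Ideal.Quotient.mkₐ R (Ideal.span {(X i : MvPolynomial σ R)}) =
      (Ideal.Quotient.mkₐ R _).comp (aeval (Function.update X i 0)) := by
    refine MvPolynomial.algHom_ext fun j => ?_
    rcases eq_or_ne j i with rfl | hj
    · simp
    · simp [hj]
  exact congr($h p)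

noncomputable section

namespace TwoQuadrics

local notation "R₇" => MvPolynomial (Fin 7) ℝ
local notation "R₅" => MvPolynomial (Fin 5) ℝ
local notation "K" => FractionRing R₅

def ideal : Ideal R₇ := Ideal.span {X 2 * X 4 - X 0 ^ 2, X 2 * X 3 + X 1 * X 4}

/-- The variables `λ, y₁, y₂, α, x` of `R₇`. -/
def freeVars : Fin 5 → Fin 7 := ![0, 3, 4, 5, 6]

def param : R₇ →ₐ[ℝ] K :=
  aeval ![t 0, -(t 0 ^ 2 * t 1) / t 2 ^ 2, t 0 ^ 2 / t 2, t 1, t 2, t 3, t 4]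
where t (i : Fin 5) : K := algebraMap R₅ K (X i)

theorem param_rename (P : R₅) : param (rename freeVars P) = algebraMap R₅ K P := by
  rw [param, aeval_rename]
  conv_rhs =>
    rw [← aeval_X_left_apply P, ← IsScalarTower.coe_toAlgHom' ℝ R₅ K, comp_aeval_apply]
  congr 2
  funext i
  fin_cases i <;> rfl

theorem ideal_le_ker_param : ideal ≤ RingHom.ker param := by
  have h : param.t 2 ≠ 0 :=
    (IsFractionRing.injective R₅ K).ne_iff' (map_zero _) |>.mpr (X_ne_zero 2)
  rw [ideal, Ideal.span_le]
  rintro _ (rfl | rfl) <;> simp [param] <;> field_simp <;> ring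

theorem exists_X4_pow_mul_sub_mem (p : R₇) :
    ∃ n : ℕ, ∃ b ∈ (rename freeVars).range, X 4 ^ n * p - b ∈ ideal := by
  refine exists_pow_mul_sub_mem_of_mem_adjoin
    ((AlgHom.mem_range _).mpr ⟨X 2, by simp [freeVars]⟩) ?_
    (adjoin_range_X (R := ℝ) ▸ Algebra.mem_top : p ∈ Algebra.adjoin ℝ (Set.range X))
  rintro _ ⟨i, rfl⟩
  fin_cases i
  · exact ⟨0, rename freeVars (X 0), AlgHom.mem_range_self _ _, by simp [freeVars]⟩
  · refine ⟨2, rename freeVars (-(X 0 ^ 2 * X 1)), AlgHom.mem_range_self _ _,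
      Ideal.mem_span_pair.mpr ⟨-X 3, X 4, ?_⟩⟩
    simp [freeVars]
    ring
  · refine ⟨1, rename freeVars (X 0 ^ 2), AlgHom.mem_range_self _ _,
      Ideal.mem_span_pair.mpr ⟨1, 0, ?_⟩⟩
    simp [freeVars]
    ring
  · exact ⟨0, rename freeVars (X 1), AlgHom.mem_range_self _ _, by simp [freeVars]⟩
  · exact ⟨0, rename freeVars (X 2), AlgHom.mem_range_self _ _, by simp [freeVars]⟩
  · exact ⟨0, rename freeVars (X 3), AlgHom.mem_range_self _ _, by simp [freeVars]⟩
  · exact ⟨0, rename freeVars (X 4), AlgHom.mem_range_self _ _, by simp [freeVars]⟩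

theorem mem_ideal_of_X4_mul_mem {h : R₇} (hh : X 4 * h ∈ ideal) : h ∈ ideal := by
  obtain ⟨a, b, hab⟩ := Ideal.mem_span_pair.mp hh
  set e : R₇ →ₐ[ℝ] R₇ := aeval (Function.update X 4 0)
  have he : e b * (X 2 * X 3) = X 0 ^ 2 * e a := by
    have := congrArg e hab
    simp [e, -aeval_eq_bind₁] at this
    linear_combination this
  have hX0 : ¬ (X 0 : R₇) ∣ X 2 * X 3 := by
    rw [X_prime.dvd_mul, X_dvd_X, X_dvd_X]
    decide
  obtain ⟨c, hc⟩ := X_prime.pow_dvd_of_dvd_mul_right 2 hX0 ⟨e a, he⟩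
  have hea : e a = c * (X 2 * X 3) :=
    mul_left_cancel₀ (pow_ne_zero 2 (X_ne_zero 0)) (by linear_combination -he + X 2 * X 3 * hc)
  obtain ⟨a₁, ha₁⟩ := X_dvd_sub_aeval_update_zero 4 a
  obtain ⟨b₁, hb₁⟩ := X_dvd_sub_aeval_update_zero 4 b
  refine Ideal.mem_span_pair.mpr ⟨a₁ - c * X 1, b₁ + c * X 2, mul_left_cancel₀ (X_ne_zero 4) ?_⟩
  linear_combination
    hab - (X 2 * X 4 - X 0 ^ 2) * (ha₁ + hea) - (X 2 * X 3 + X 1 * X 4) * (hb₁ + hc)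

theorem mem_ideal_of_X4_pow_mul_mem {h : R₇} {n : ℕ} (hh : X 4 ^ n * h ∈ ideal) :
    h ∈ ideal := by
  induction n with
  | zero => simpa using hh
  | succ n ih => exact ih (mem_ideal_of_X4_mul_mem (by rwa [← mul_assoc, ← pow_succ']))

theorem ker_param : RingHom.ker param = ideal := by
  refine le_antisymm (fun p hp => ?_) ideal_le_ker_param
  obtain ⟨n, _, hb, hnP⟩ := exists_X4_pow_mul_sub_mem p
  obtain ⟨P, rfl⟩ := (AlgHom.mem_range _).mp hb
  have hP : P = 0 := by
    have h := RingHom.mem_ker.mp (ideal_le_ker_param hnP)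
    rw [map_sub, map_mul, RingHom.mem_ker.mp hp, mul_zero, zero_sub, neg_eq_zero,
      param_rename] at h
    exact IsFractionRing.injective R₅ K (h.trans (map_zero _).symm)
  rw [hP, map_zero, sub_zero] at hnP
  exact mem_ideal_of_X4_pow_mul_mem hnP

end TwoQuadrics

end

/-- In the polynomial ring `ℝ[λ, β₁, β₂, y₁, y₂, α, x]` (variables indexed by `Fin 7`:
`λ = X 0`, `β₁ = X 1`, `β₂ = X 2`, `y₁ = X 3`, `y₂ = X 4`, `α = X 5`, `x = X 6`),
the ideal generated by `β₂*y₂ - λ^2` and `β₂*y₁ + β₁*y₂` is prime. -/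
theorem statement11 :
    (Ideal.span {(X 2 * X 4 - X 0 ^ 2 : MvPolynomial (Fin 7) ℝ),
                 (X 2 * X 3 + X 1 * X 4 : MvPolynomial (Fin 7) ℝ)}).IsPrime := by
  rw [← TwoQuadrics.ideal, ← TwoQuadrics.ker_param]
  exact RingHom.ker_isPrime _
end

section
/- In the polynomial ring ℝ[a₂, a₃, b₂, b₃, c₂, c₃, α₁₃, α₂₃, β₁₃, β₂₃, γ₁₃, γ₂₃] in twelve variables over ℝ, the ideal generated by the six polynomials f₁ = α₂₃ − a₂α₁₃ + a₃, f₂ = β₂₃ − a₂β₁₃ + a₃, f₃ = α₂₃ − b₂α₁₃ + b₃, f₄ = γ₂₃ − b₂γ₁₃ + b₃, f₅ = β₂₃ − c₂β₁₃ + c₃, f₆ = γ₂₃ − c₂γ₁₃ + c₃ is a prime ideal. -/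
/-!
Solving `f₁, f₂, f₄` for `α₂₃, β₂₃, γ₂₃` and `f₃, f₅` for `b₃, c₃` leaves the single relation
`f₆ ≡ (a₂ - c₂)(γ₁₃ - β₁₃) - (a₂ - b₂)(γ₁₃ - α₁₃)`. So the ideal is the preimage of `(x₀x₁ - x₂x₃)`
under a substitution into seven variables `x₀, …, x₆` that has an inverse modulo the ideal, and
`x₀x₁ - x₂x₃` is prime: as a polynomial in `x₀` it is linear with coprime coefficients `x₁` and
`-x₂x₃`.
-/

open MvPolynomial

theorem MvPolynomial.irreducible_X_mul_X_sub_X_mul_X {R : Type*} [CommRing R] [IsDomain R]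
    (n : ℕ) : Irreducible (X 0 * X 1 - X 2 * X 3 : MvPolynomial (Fin (n + 4)) R) := by
  have hrelPrime : IsRelPrime (X 0 : MvPolynomial (Fin (n + 3)) R) (-(X 1 * X 2)) := by
    refine X_prime.irreducible.isRelPrime_iff_not_dvd.mpr ?_
    simp [dvd_neg, X_dvd_mul_iff, Fin.ext_iff, Nat.mod_eq_of_lt]
  have himage : finSuccEquiv R (n + 3) (X 0 * X 1 - X 2 * X 3) =
      Polynomial.C (X 0) * Polynomial.X + Polynomial.C (-(X 1 * X 2)) := by
    rw [map_sub, map_mul, map_mul, finSuccEquiv_X_zero,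
      show (1 : Fin (n + 4)) = Fin.succ 0 from rfl, show (2 : Fin (n + 4)) = Fin.succ 1 from rfl,
      show (3 : Fin (n + 4)) = Fin.succ 2 from rfl, finSuccEquiv_X_succ, finSuccEquiv_X_succ,
      finSuccEquiv_X_succ, map_neg, Polynomial.C_mul]
    ring
  rw [← MulEquiv.irreducible_iff (finSuccEquiv R (n + 3)).toMulEquiv]
  exact himage ▸ Polynomial.irreducible_C_mul_X_add_C (X_ne_zero 0) hrelPrime

theorem MvPolynomial.isPrime_span_X_mul_X_sub_X_mul_X {R : Type*} [CommRing R] [IsDomain R]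
    [UniqueFactorizationMonoid R] (n : ℕ) :
    (Ideal.span {(X 0 * X 1 - X 2 * X 3 : MvPolynomial (Fin (n + 4)) R)}).IsPrime :=
  Ideal.isPrime_span_singleton_of_prime
    (UniqueFactorizationMonoid.irreducible_iff_prime.mp (irreducible_X_mul_X_sub_X_mul_X n))

theorem MvPolynomial.isPrime_of_aeval_leftInverse {σ τ R : Type*} [CommRing R]
    {I : Ideal (MvPolynomial σ R)} {J : Ideal (MvPolynomial τ R)} (hJ : J.IsPrime)
    (φ : σ → MvPolynomial τ R) (ψ : τ → MvPolynomial σ R)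
    (hφ : I ≤ J.comap (aeval φ)) (hψ : J ≤ I.comap (aeval ψ))
    (hψφ : ∀ i, aeval ψ (φ i) - X i ∈ I) : I.IsPrime := by
  have hψφ_mod : (Ideal.Quotient.mkₐ R I).comp ((aeval ψ).comp (aeval φ)) =
      Ideal.Quotient.mkₐ R I :=
    algHom_ext fun i ↦ by simpa [Ideal.Quotient.eq] using hψφ i
  suffices J.comap (aeval φ) = I from this ▸ Ideal.comap_isPrime _ _
  refine le_antisymm (fun p hp ↦ ?_) hφ
  rw [← Ideal.Quotient.eq_zero_iff_mem, ← Ideal.Quotient.mkₐ_eq_mk R, ← hψφ_mod]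
  exact Ideal.Quotient.eq_zero_iff_mem.mpr (hψ hp)

/-- The variables `a₂, a₃, b₂, b₃, c₂, c₃, α₁₃, α₂₃, β₁₃, β₂₃, γ₁₃, γ₂₃` are `X 0, …, X 11`.
In terms of `x₀ = a₂ - c₂`, `x₁ = γ₁₃ - β₁₃`, `x₂ = a₂ - b₂`, `x₃ = γ₁₃ - α₁₃`, `x₄ = a₂`,
`x₅ = a₃`, `x₆ = γ₁₃` (this is `coordinates`), each variable is congruent modulo `f₁, …, f₅` to
its entry here. -/
noncomputable def parametrization : Fin 12 → MvPolynomial (Fin 7) ℝ :=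
  ![X 4, X 5, X 4 - X 2, X 5 - X 2 * (X 6 - X 3), X 4 - X 0, X 5 - X 0 * (X 6 - X 1),
    X 6 - X 3, X 4 * (X 6 - X 3) - X 5, X 6 - X 1, X 4 * (X 6 - X 1) - X 5, X 6,
    X 4 * X 6 - X 2 * X 3 - X 5]

noncomputable def coordinates : Fin 7 → MvPolynomial (Fin 12) ℝ :=
  ![X 0 - X 4, X 10 - X 8, X 0 - X 2, X 10 - X 6, X 0, X 1, X 10]

/-- In the polynomial ring `ℝ[a₂, a₃, b₂, b₃, c₂, c₃, α₁₃, α₂₃, β₁₃, β₂₃, γ₁₃, γ₂₃]`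
(variables indexed by `Fin 12` in this order: `a₂ = X 0`, `a₃ = X 1`, `b₂ = X 2`,
`b₃ = X 3`, `c₂ = X 4`, `c₃ = X 5`, `α₁₃ = X 6`, `α₂₃ = X 7`, `β₁₃ = X 8`, `β₂₃ = X 9`,
`γ₁₃ = X 10`, `γ₂₃ = X 11`), the ideal generated by the six polynomials
`f₁ = α₂₃ - a₂·α₁₃ + a₃`, `f₂ = β₂₃ - a₂·β₁₃ + a₃`, `f₃ = α₂₃ - b₂·α₁₃ + b₃`,
`f₄ = γ₂₃ - b₂·γ₁₃ + b₃`, `f₅ = β₂₃ - c₂·β₁₃ + c₃`, `f₆ = γ₂₃ - c₂·γ₁₃ + c₃`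
is prime. -/
theorem statement12 :
    (Ideal.span {(X 7 - X 0 * X 6 + X 1 : MvPolynomial (Fin 12) ℝ),
                 (X 9 - X 0 * X 8 + X 1 : MvPolynomial (Fin 12) ℝ),
                 (X 7 - X 2 * X 6 + X 3 : MvPolynomial (Fin 12) ℝ),
                 (X 11 - X 2 * X 10 + X 3 : MvPolynomial (Fin 12) ℝ),
                 (X 9 - X 4 * X 8 + X 5 : MvPolynomial (Fin 12) ℝ),
                 (X 11 - X 4 * X 10 + X 5 : MvPolynomial (Fin 12) ℝ)}).IsPrime := by
  generalize hI : Ideal.span (α := MvPolynomial (Fin 12) ℝ) _ = I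
  have f₁ : X 7 - X 0 * X 6 + X 1 ∈ I := hI ▸ Ideal.subset_span (by simp)
  have f₂ : X 9 - X 0 * X 8 + X 1 ∈ I := hI ▸ Ideal.subset_span (by simp)
  have f₃ : X 7 - X 2 * X 6 + X 3 ∈ I := hI ▸ Ideal.subset_span (by simp)
  have f₄ : X 11 - X 2 * X 10 + X 3 ∈ I := hI ▸ Ideal.subset_span (by simp)
  have f₅ : X 9 - X 4 * X 8 + X 5 ∈ I := hI ▸ Ideal.subset_span (by simp)
  refine isPrime_of_aeval_leftInverse (isPrime_span_X_mul_X_sub_X_mul_X 3)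
    parametrization coordinates ?_ ?_ ?_
  · rw [← hI, Ideal.span_le]
    simp only [Set.insert_subset_iff, Set.singleton_subset_iff, SetLike.mem_coe, Ideal.mem_comap,
      Ideal.mem_span_singleton, parametrization, Matrix.cons_val, Matrix.cons_val_zero,
      Matrix.cons_val_one, aeval_X, map_add, map_sub, map_mul]
    exact ⟨⟨0, by ring⟩, ⟨0, by ring⟩, ⟨0, by ring⟩, ⟨0, by ring⟩, ⟨0, by ring⟩, ⟨1, by ring⟩⟩
  · have f₆ : X 11 - X 4 * X 10 + X 5 ∈ I := hI ▸ Ideal.subset_span (by simp)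
    rw [Ideal.span_singleton_le_iff_mem, Ideal.mem_comap]
    convert sub_mem (sub_mem (sub_mem (add_mem (add_mem f₃ f₂) f₆) f₁) f₅) f₄ using 1
    simp only [coordinates, Matrix.cons_val, Matrix.cons_val_zero, Matrix.cons_val_one, aeval_X,
      map_sub, map_mul]
    ring
  · intro i
    fin_cases i <;> simp only [Fin.zero_eta, Fin.mk_one, Fin.reduceFinMk, Fin.isValue,
      parametrization, coordinates, Matrix.cons_val, Matrix.cons_val_zero, Matrix.cons_val_one,
      aeval_X, map_sub, map_mul, sub_sub_cancel, sub_self, zero_mem]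
    · convert sub_mem f₁ f₃ using 1; ring
    · convert sub_mem f₂ f₅ using 1; ring
    · convert neg_mem f₁ using 1; ring
    · convert neg_mem f₂ using 1; ring
    · convert sub_mem (sub_mem f₃ f₁) f₄ using 1; ring
end

section
/- Fix integers 0 = i₀ < i₁ < ⋯ < i_l = N with l ≥ 1 and set j_k := i_k − i_{k−1}. Let P be the group of real N×N matrices of determinant 1 that are block upper-triangular with respect to the partition (j₁, …, j_l) and whose diagonal blocks p₁, …, p_l all have positive determinant, and let Γ_P := P ∩ SL_N(ℤ). Then: (a) for every γ ∈ Γ_P, each diagonal block γ_k lies in SL_{j_k}(ℤ); (b) the map sending p ∈ P to the pair consisting of the tuple (det p₁, …, det p_l) ∈ (ℝ_{>0})^l and the tuple of cosets ((det p_k)^{-1/j_k}·p_k · SL_{j_k}(ℤ))_{k=1}^{l} in ∏_{k=1}^{l} SL_{j_k}(ℝ)/SL_{j_k}(ℤ) descends to a well-defined map Φ on the quotient P/Γ_P (with the quotient topology), and Φ is continuous and proper, i.e. the preimage under Φ of every compact set is compact. -/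
open Matrix

noncomputable section

/-- `p` is block upper-triangular with respect to the partition of `{0, …, N-1}` with
cut points `part 0 < part 1 < ⋯ < part l`: for every cut point the lower-left block
(rows `≥ part k`, columns `< part k`) vanishes. -/
def IsBUT (N l : ℕ) (part : Fin (l + 1) → ℕ) (p : Matrix (Fin N) (Fin N) ℝ) : Prop :=
  ∀ (k : Fin (l + 1)) (r c : Fin N), part k ≤ (r : ℕ) → (c : ℕ) < part k → p r c = 0

/-- The embedding of the index set of the `k`-th diagonal block into `Fin N`. -/
def blockEmb (N l : ℕ) (part : Fin (l + 1) → ℕ) (hmono : StrictMono part)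
    (hlast : part (Fin.last l) = N) (k : Fin l)
    (a : Fin (part k.succ - part k.castSucc)) : Fin N :=
  ⟨part k.castSucc + a, by
    have h1 : part k.castSucc < part k.succ := hmono (Fin.castSucc_lt_succ : k.castSucc < k.succ)
    have h2 : part k.succ ≤ N := by
      rw [← hlast]; exact hmono.monotone (Fin.le_last k.succ)
    have h3 := a.isLt
    omega⟩

/-- The `k`-th diagonal block `p_k` of a matrix (a square block of size
`j_k = part (k+1) - part k` on the diagonal). -/
def dblock (N l : ℕ) (part : Fin (l + 1) → ℕ) (hmono : StrictMono part)
    (hlast : part (Fin.last l) = N) (p : Matrix (Fin N) (Fin N) ℝ) (k : Fin l) :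
    Matrix (Fin (part k.succ - part k.castSucc)) (Fin (part k.succ - part k.castSucc)) ℝ :=
  Matrix.of fun a b => p (blockEmb N l part hmono hlast k a) (blockEmb N l part hmono hlast k b)

/-- The parabolic group `P`: real `N × N` matrices of determinant `1` which are block
upper-triangular for the given partition and whose diagonal blocks have positive
determinant. -/
def Pset (N l : ℕ) (part : Fin (l + 1) → ℕ) (hmono : StrictMono part)
    (hlast : part (Fin.last l) = N) : Set (Matrix (Fin N) (Fin N) ℝ) :=
  {p | p.det = 1 ∧ IsBUT N l part p ∧
    ∀ k : Fin l, 0 < (dblock N l part hmono hlast p k).det}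

/-- The relation of right translation by `Γ_P = P ∩ SL_N(ℤ)` on `P`. -/
def pRel (N l : ℕ) (part : Fin (l + 1) → ℕ) (hmono : StrictMono part)
    (hlast : part (Fin.last l) = N)
    (p q : ↥(Pset N l part hmono hlast)) : Prop :=
  ∃ γ : Matrix (Fin N) (Fin N) ℤ,
    γ.map (Int.cast : ℤ → ℝ) ∈ Pset N l part hmono hlast ∧
    (q : Matrix (Fin N) (Fin N) ℝ) =
      (p : Matrix (Fin N) (Fin N) ℝ) * γ.map (Int.cast : ℤ → ℝ)

/-- The quotient `P/Γ_P`, with the quotient topology. -/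
abbrev PQuot (N l : ℕ) (part : Fin (l + 1) → ℕ) (hmono : StrictMono part)
    (hlast : part (Fin.last l) = N) :=
  Quot (pRel N l part hmono hlast)

/-- The subgroup `SL_m(ℤ)` of `SL_m(ℝ)`, as the range of the coefficient map. -/
def SLZ (m : ℕ) : Subgroup (Matrix.SpecialLinearGroup (Fin m) ℝ) :=
  MonoidHom.range
    (Matrix.SpecialLinearGroup.map (Int.castRingHom ℝ) :
      Matrix.SpecialLinearGroup (Fin m) ℤ →* Matrix.SpecialLinearGroup (Fin m) ℝ)

instance (m : ℕ) : TopologicalSpace (Matrix.SpecialLinearGroup (Fin m) ℝ) :=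
  inferInstanceAs (TopologicalSpace {A : Matrix (Fin m) (Fin m) ℝ // A.det = 1})

lemma dblock_det_pos (N l : ℕ) (part : Fin (l + 1) → ℕ) (hmono : StrictMono part)
    (hlast : part (Fin.last l) = N) (p : ↥(Pset N l part hmono hlast)) (k : Fin l) :
    0 < (dblock N l part hmono hlast (p : Matrix (Fin N) (Fin N) ℝ) k).det :=
  p.2.2.2 k

/-- The normalized diagonal block `(det p_k)^{-1/j_k} • p_k`, an element of
`SL_{j_k}(ℝ)`. -/
def nblock (N l : ℕ) (part : Fin (l + 1) → ℕ) (hmono : StrictMono part)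
    (hlast : part (Fin.last l) = N) (p : ↥(Pset N l part hmono hlast)) (k : Fin l) :
    Matrix.SpecialLinearGroup (Fin (part k.succ - part k.castSucc)) ℝ :=
  ⟨((dblock N l part hmono hlast (p : Matrix (Fin N) (Fin N) ℝ) k).det ^
      (-(1 : ℝ) / ((part k.succ - part k.castSucc : ℕ) : ℝ))) •
      dblock N l part hmono hlast (p : Matrix (Fin N) (Fin N) ℝ) k, by
    have hpos := dblock_det_pos N l part hmono hlast p k
    have hm : 0 < part k.succ - part k.castSucc := by
      have h1 : part k.castSucc < part k.succ := hmono (Fin.castSucc_lt_succ : k.castSucc < k.succ)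
      omega
    have hm' : ((part k.succ - part k.castSucc : ℕ) : ℝ) ≠ 0 :=
      Nat.cast_ne_zero.mpr hm.ne'
    set d := (dblock N l part hmono hlast (p : Matrix (Fin N) (Fin N) ℝ) k).det with hd
    rw [Matrix.det_smul, Fintype.card_fin, ← hd]
    rw [← Real.rpow_natCast
      (d ^ (-(1 : ℝ) / ((part k.succ - part k.castSucc : ℕ) : ℝ)))
      (part k.succ - part k.castSucc)]
    rw [← Real.rpow_mul hpos.le]
    have he : (-(1 : ℝ) / ((part k.succ - part k.castSucc : ℕ) : ℝ)) *
        ((part k.succ - part k.castSucc : ℕ) : ℝ) = -1 := by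
      field_simp
    rw [he, Real.rpow_neg_one]
    exact inv_mul_cancel₀ hpos.ne'⟩

/-- The target of the map `Φ`: the tuple of block determinants in `(ℝ_{>0})^l` and the
tuple of cosets of normalized blocks in `∏ₖ SL_{j_k}(ℝ)/SL_{j_k}(ℤ)`. -/
abbrev ParabolicTarget (l : ℕ) (part : Fin (l + 1) → ℕ) :=
  (Fin l → {x : ℝ // 0 < x}) ×
    ((k : Fin l) →
      Matrix.SpecialLinearGroup (Fin (part k.succ - part k.castSucc)) ℝ ⧸
        SLZ (part k.succ - part k.castSucc))

/-!
Index `Fin N` by pairs (block `k`, position `a` in block `k`); then `P` becomes the group of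
block upper-triangular matrices and `dblock` the diagonal blocks, which are multiplicative on `P`.

(a) The diagonal blocks of an integral `γ ∈ Γ_P` have positive integral determinants with
product `det γ = 1`, so all of them are `1`.

(b) Since `(p γ)_k = p_k γ_k` with `γ_k ∈ SL_{j_k}(ℤ)`, the map is constant on `Γ_P`-orbits.
For properness, lift the `SL_{j_k}(ℝ)/SL_{j_k}(ℤ)`-components of a compact `K` to compact sets
`L_k ⊆ SL_{j_k}(ℝ)`. If `Φ(p) ∈ K`, a block-diagonal integral `γ₀` moves each normalized
block of `p` into `L_k`, so the diagonal blocks of `p γ₀` are bounded. A block-unipotent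
integral `γ₁`, found by back substitution and rounding, then makes every block `(k, m)`,
`k < m`, of `p γ₀ γ₁` equal to the bounded block `(k, k)` times a matrix with entries in
`[-1/2, 1/2]`. So `Φ⁻¹(K)` is a closed subset of the image of a compact subset of `P`.
-/

namespace Matrix

section SigmaBlocks

variable {ι R : Type*} {n : ι → Type*}

def sigmaBlock (M : Matrix (Σ k, n k) (Σ k, n k) R) (k m : ι) : Matrix (n k) (n m) R :=
  of fun a b => M ⟨k, a⟩ ⟨m, b⟩

theorem sigmaBlock_self (M : Matrix (Σ k, n k) (Σ k, n k) R) (k : ι) :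
    sigmaBlock M k k = blockDiag' M k :=
  rfl

theorem blockDiag'_map_apply {S : Type*} (M : Matrix (Σ k, n k) (Σ k, n k) R) (f : R → S)
    (k : ι) : blockDiag' (M.map f) k = (blockDiag' M k).map f :=
  rfl

theorem sigmaBlock_mul [Fintype ι] [∀ k, Fintype (n k)] [NonUnitalNonAssocSemiring R]
    (M N : Matrix (Σ k, n k) (Σ k, n k) R) (k m : ι) :
    sigmaBlock (M * N) k m = ∑ t, sigmaBlock M k t * sigmaBlock N t m := by
  ext a b
  simp [sigmaBlock, mul_apply, Fintype.sum_sigma, sum_apply]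

variable [LT ι]

theorem BlockTriangular.sigmaBlock_eq_zero [Zero R] {M : Matrix (Σ k, n k) (Σ k, n k) R}
    (hM : M.BlockTriangular Sigma.fst) {k m : ι} (h : m < k) : sigmaBlock M k m = 0 :=
  ext fun _ _ => hM h

end SigmaBlocks

section LinearOrder

variable {ι R : Type*} [LinearOrder ι] [Fintype ι] {n : ι → Type*} [∀ k, Fintype (n k)]
  {M N : Matrix (Σ k, n k) (Σ k, n k) R}

theorem BlockTriangular.blockDiag'_mul [NonUnitalNonAssocSemiring R]
    (hM : M.BlockTriangular Sigma.fst) (hN : N.BlockTriangular Sigma.fst) (k : ι) :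
    blockDiag' (M * N) k = blockDiag' M k * blockDiag' N k := by
  rw [← sigmaBlock_self, sigmaBlock_mul, Finset.sum_eq_single k]
  · rfl
  · intro t _ htk
    rcases htk.lt_or_gt with h | h
    · rw [hM.sigmaBlock_eq_zero h, Matrix.zero_mul]
    · rw [hN.sigmaBlock_eq_zero h, Matrix.mul_zero]
  · simp

theorem BlockTriangular.det_eq_prod_blockDiag' [CommRing R] [∀ k, DecidableEq (n k)]
    (hM : M.BlockTriangular Sigma.fst) : M.det = ∏ k, (blockDiag' M k).det := by
  classical
  rw [hM.det_fintype]
  refine Finset.prod_congr rfl fun k _ => ?_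
  rw [← det_reindex_self (Equiv.sigmaSubtype k)]
  rfl

variable [∀ k, DecidableEq (n k)]

variable (n) in
def sigmaParabolic : Set (Matrix (Σ k, n k) (Σ k, n k) ℝ) :=
  {M | M.det = 1 ∧ M.BlockTriangular Sigma.fst ∧ ∀ k, 0 < (blockDiag' M k).det}

theorem mul_mem_sigmaParabolic {M N : Matrix (Σ k, n k) (Σ k, n k) ℝ}
    (hM : M ∈ sigmaParabolic n) (hN : N ∈ sigmaParabolic n) : M * N ∈ sigmaParabolic n := by
  refine ⟨by rw [det_mul, hM.1, hN.1, one_mul], hM.2.1.mul hN.2.1, fun k => ?_⟩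
  rw [hM.2.1.blockDiag'_mul hN.2.1, det_mul]
  exact mul_pos (hM.2.2 k) (hN.2.2 k)

theorem det_blockDiag'_eq_one_of_map_mem_sigmaParabolic {γ : Matrix (Σ k, n k) (Σ k, n k) ℤ}
    (hγ : γ.map (Int.cast : ℤ → ℝ) ∈ sigmaParabolic n) (k : ι) :
    (blockDiag' γ k).det = 1 := by
  have hcast : ∀ k,
      ((blockDiag' γ k).det : ℝ) = (blockDiag' (γ.map (Int.cast : ℤ → ℝ)) k).det := by
    intro k
    rw [blockDiag'_map_apply, Int.cast_det]
  have hpos : ∀ k, 0 < (blockDiag' γ k).det := fun k => by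
    exact_mod_cast (hcast k).symm ▸ hγ.2.2 k
  have hprod : ∏ k, (blockDiag' γ k).det = 1 := by
    have : ((∏ k, (blockDiag' γ k).det : ℤ) : ℝ) = 1 := by
      rw [Int.cast_prod, Finset.prod_congr rfl fun k _ => hcast k,
        ← hγ.2.1.det_eq_prod_blockDiag', hγ.1]
    exact_mod_cast this
  exact Int.eq_one_of_dvd_one (hpos k).le (hprod ▸ Finset.dvd_prod_of_mem _ (Finset.mem_univ k))

theorem map_mem_sigmaParabolic_of_det_blockDiag' {γ : Matrix (Σ k, n k) (Σ k, n k) ℤ}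
    (hγ : γ.BlockTriangular Sigma.fst) (hdet : ∀ k, (blockDiag' γ k).det = 1) :
    γ.map (Int.cast : ℤ → ℝ) ∈ sigmaParabolic n := by
  have hγℝ : (γ.map (Int.cast : ℤ → ℝ)).BlockTriangular Sigma.fst :=
    hγ.map (Int.castRingHom ℝ)
  have hdetℝ : ∀ k, (blockDiag' (γ.map (Int.cast : ℤ → ℝ)) k).det = 1 := fun k => by
    rw [blockDiag'_map_apply, ← Int.cast_det, hdet k, Int.cast_one]
  refine ⟨?_, hγℝ, fun k => by rw [hdetℝ k]; exact one_pos⟩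
  rw [hγℝ.det_eq_prod_blockDiag', Finset.prod_congr rfl fun k _ => hdetℝ k,
    Finset.prod_const_one]

end LinearOrder

theorem isCompact_setOf_abs_apply_le {m n : Type*} [Finite m] [Finite n] (c : ℝ) :
    IsCompact {A : Matrix m n ℝ | ∀ i j, |A i j| ≤ c} := by
  have hbox :
      {A : m → n → ℝ | ∀ i j, |A i j| ≤ c} = Set.Icc (fun _ _ => -c) fun _ _ => c := by
    ext A
    simp [abs_le, Pi.le_def, forall_and]
  exact (hbox ▸ isCompact_Icc : IsCompact {A : m → n → ℝ | ∀ i j, |A i j| ≤ c})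

theorem abs_mul_apply_le {m n o : Type*} [Fintype n] {X : Matrix m n ℝ} {Y : Matrix n o ℝ}
    {B C : ℝ} (hX : ∀ i j, |X i j| ≤ B) (hY : ∀ i j, |Y i j| ≤ C) (i : m) (k : o) :
    |(X * Y) i k| ≤ Fintype.card n * (B * C) := by
  calc |(X * Y) i k| ≤ ∑ j, |X i j * Y j k| := Finset.abs_sum_le_sum_abs _ _
    _ ≤ ∑ _j : n, B * C := Finset.sum_le_sum fun j _ => by
      rw [abs_mul]
      exact mul_le_mul (hX i j) (hY j k) (abs_nonneg _) ((abs_nonneg _).trans (hX i j))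
    _ = Fintype.card n * (B * C) := by simp

section Reduction

variable {l : ℕ} {n : Fin l → Type*} [∀ k, Fintype (n k)] [∀ k, DecidableEq (n k)]

/-- The strictly upper blocks `R_km` of an integral `γ = 1 + R` making `M γ` bounded, found by
back substitution up each block column: block `(k, m)` of `M γ` is
`M_kk (R_km + M_kk⁻¹ (M_km + ∑_{k<t} M_kt R_tm))`, and rounding puts the entries of the second
factor in `[-1/2, 1/2]`. -/
def blockReducer (M : Matrix (Σ k, n k) (Σ k, n k) ℝ) (k m : Fin l) : Matrix (n k) (n m) ℤ :=
  if _hkm : k < m then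
    -((blockDiag' M k)⁻¹ * (sigmaBlock M k m +
      ∑ t, if _hkt : k < t then
        sigmaBlock M k t * (blockReducer M t m).map (Int.cast : ℤ → ℝ) else 0)).map round
  else 0
termination_by (m : ℕ) - k
decreasing_by
  simp only [Fin.lt_def] at *
  omega

variable (M : Matrix (Σ k, n k) (Σ k, n k) ℝ)

theorem blockReducer_of_lt {k m : Fin l} (hkm : k < m) :
    blockReducer M k m = -((blockDiag' M k)⁻¹ * (sigmaBlock M k m + ∑ t, if k < t then
      sigmaBlock M k t * (blockReducer M t m).map (Int.cast : ℤ → ℝ) else 0)).map round := by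
  rw [blockReducer, dif_pos hkm]
  simp only [dite_eq_ite]

theorem blockReducer_of_not_lt {k m : Fin l} (hkm : ¬k < m) : blockReducer M k m = 0 := by
  rw [blockReducer, dif_neg hkm]

def blockReducerMatrix : Matrix (Σ k, n k) (Σ k, n k) ℤ :=
  of fun x y => blockReducer M x.1 y.1 x.2 y.2

theorem blockTriangular_one_add_blockReducerMatrix :
    (1 + blockReducerMatrix M).BlockTriangular Sigma.fst := by
  refine blockTriangular_one.add fun x y h => ?_
  simp [blockReducerMatrix, blockReducer_of_not_lt M (not_lt_of_gt h)]

theorem blockDiag'_one_add_blockReducerMatrix (k : Fin l) :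
    blockDiag' (1 + blockReducerMatrix M) k = 1 := by
  rw [blockDiag'_add, Pi.add_apply, blockDiag'_one, Pi.one_apply, add_eq_left]
  exact blockReducer_of_not_lt M (lt_irrefl k)

theorem sigmaBlock_mul_one_add_blockReducerMatrix (hM : M.BlockTriangular Sigma.fst)
    (hdet : ∀ k, IsUnit (blockDiag' M k).det) {k m : Fin l} (hkm : k < m) :
    sigmaBlock (M * (1 + blockReducerMatrix M).map (Int.cast : ℤ → ℝ)) k m =
      blockDiag' M k * ((blockReducer M k m).map (Int.cast : ℤ → ℝ) +
        (blockDiag' M k)⁻¹ * (sigmaBlock M k m + ∑ t, if k < t then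
          sigmaBlock M k t * (blockReducer M t m).map (Int.cast : ℤ → ℝ) else 0)) := by
  have hsplit : ∀ t, sigmaBlock M k t * (blockReducer M t m).map (Int.cast : ℤ → ℝ) =
      (if k = t then blockDiag' M k * (blockReducer M k m).map (Int.cast : ℤ → ℝ) else 0) +
        if k < t then
          sigmaBlock M k t * (blockReducer M t m).map (Int.cast : ℤ → ℝ) else 0 := by
    intro t
    rcases lt_trichotomy t k with h | rfl | h
    · rw [if_neg h.ne', if_neg (not_lt_of_gt h), hM.sigmaBlock_eq_zero h, Matrix.zero_mul,
        add_zero]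
    · rw [if_pos rfl, if_neg (lt_irrefl t), add_zero, sigmaBlock_self]
    · rw [if_neg h.ne, if_pos h, zero_add]
  have hmul : sigmaBlock (M * (1 + blockReducerMatrix M).map (Int.cast : ℤ → ℝ)) k m =
      sigmaBlock M k m +
        ∑ t, sigmaBlock M k t * (blockReducer M t m).map (Int.cast : ℤ → ℝ) := by
    rw [Matrix.map_add _ Int.cast_add, Matrix.map_one _ Int.cast_zero Int.cast_one, Matrix.mul_add,
      Matrix.mul_one]
    exact congrArg (sigmaBlock M k m + ·) (sigmaBlock_mul M _ k m)
  rw [hmul, Finset.sum_congr rfl fun t _ => hsplit t, Finset.sum_add_distrib, Finset.sum_ite_eq,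
    if_pos (Finset.mem_univ k), Matrix.mul_add, ← Matrix.mul_assoc, mul_nonsing_inv _ (hdet k),
    Matrix.one_mul]
  abel

theorem exists_blockUnipotent_abs_mul_le (hM : M.BlockTriangular Sigma.fst)
    (hdet : ∀ k, IsUnit (blockDiag' M k).det) {B : ℝ}
    (hB : ∀ k a b, |blockDiag' M k a b| ≤ B) :
    ∃ γ : Matrix (Σ k, n k) (Σ k, n k) ℤ, γ.BlockTriangular Sigma.fst ∧
      (∀ k, blockDiag' γ k = 1) ∧
      ∀ x y, |(M * γ.map (Int.cast : ℤ → ℝ)) x y| ≤ Fintype.card (Σ k, n k) * B := by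
  set γ := 1 + blockReducerMatrix M
  have hγ : γ.BlockTriangular Sigma.fst := blockTriangular_one_add_blockReducerMatrix M
  have hγℝ : (γ.map (Int.cast : ℤ → ℝ)).BlockTriangular Sigma.fst :=
    hγ.map (Int.castRingHom ℝ)
  have hγ1 : ∀ k, blockDiag' γ k = 1 := blockDiag'_one_add_blockReducerMatrix M
  refine ⟨γ, hγ, hγ1, ?_⟩
  rintro ⟨k, a⟩ ⟨m, b⟩
  have hB0 : 0 ≤ B := (abs_nonneg _).trans (hB k a a)
  rcases lt_trichotomy m k with h | rfl | h
  · rw [hM.mul hγℝ h, abs_zero]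
    positivity
  · have hpos : (1 : ℝ) ≤ Fintype.card (Σ k, n k) := by
      exact_mod_cast Fintype.card_pos_iff.2 (⟨⟨m, a⟩⟩ : Nonempty (Σ k, n k))
    calc |(M * γ.map (Int.cast : ℤ → ℝ)) ⟨m, a⟩ ⟨m, b⟩|
        = |blockDiag' (M * γ.map (Int.cast : ℤ → ℝ)) m a b| := rfl
      _ = |blockDiag' M m a b| := by
        rw [hM.blockDiag'_mul hγℝ, blockDiag'_map_apply, hγ1,
          Matrix.map_one _ Int.cast_zero Int.cast_one, Matrix.mul_one]
      _ ≤ B := hB m a b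
      _ ≤ Fintype.card (Σ k, n k) * B := le_mul_of_one_le_left hB0 hpos
  · set Z := (blockDiag' M k)⁻¹ * (sigmaBlock M k m +
      ∑ t, if k < t then
        sigmaBlock M k t * (blockReducer M t m).map (Int.cast : ℤ → ℝ) else 0)
    have hfrac : ∀ c d,
        |((blockReducer M k m).map (Int.cast : ℤ → ℝ) + Z) c d| ≤ 1 / 2 := by
      intro c d
      rw [blockReducer_of_lt M h]
      simp only [Matrix.add_apply, Matrix.map_apply, Matrix.neg_apply, Int.cast_neg,
        neg_add_eq_sub]
      exact abs_sub_round _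
    calc |(M * γ.map (Int.cast : ℤ → ℝ)) ⟨k, a⟩ ⟨m, b⟩|
        = |sigmaBlock (M * γ.map (Int.cast : ℤ → ℝ)) k m a b| := rfl
      _ = |(blockDiag' M k * ((blockReducer M k m).map (Int.cast : ℤ → ℝ) + Z)) a b| := by
        rw [sigmaBlock_mul_one_add_blockReducerMatrix M hM hdet h]
      _ ≤ Fintype.card (n k) * (B * (1 / 2)) := abs_mul_apply_le (hB k) hfrac a b
      _ ≤ Fintype.card (Σ k, n k) * B := by
        have : (Fintype.card (n k) : ℝ) ≤ Fintype.card (Σ k, n k) := by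
          exact_mod_cast Fintype.card_le_of_injective _ sigma_mk_injective
        nlinarith

end Reduction

end Matrix

theorem IsCompact.exists_isCompact_subset_image_of_isOpenMap {X Y : Type*} [TopologicalSpace X]
    [TopologicalSpace Y] [WeaklyLocallyCompactSpace X] {f : X → Y} (hf : IsOpenMap f)
    (hsurj : Function.Surjective f) {K : Set Y} (hK : IsCompact K) :
    ∃ L, IsCompact L ∧ K ⊆ f '' L := by
  choose C hC hCx using fun x : X => exists_compact_mem_nhds x
  obtain ⟨t, ht⟩ := hK.elim_finite_subcover (fun x => f '' interior (C x))
    (fun x => hf _ isOpen_interior) fun y _ => by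
      obtain ⟨x, rfl⟩ := hsurj y
      exact Set.mem_iUnion.2 ⟨x, Set.mem_image_of_mem f (mem_interior_iff_mem_nhds.2 (hCx x))⟩
  refine ⟨⋃ x ∈ t, C x, t.isCompact_biUnion fun x _ => hC x, ht.trans ?_⟩
  rw [Set.image_iUnion₂]
  exact Set.iUnion₂_mono fun x _ => Set.image_mono interior_subset

theorem IsCompact.exists_bound_abs_apply {m n : Type*} [Fintype m] [Fintype n]
    {s : Set (Matrix m n ℝ)} (hs : IsCompact s) : ∃ B, ∀ X ∈ s, ∀ i j, |X i j| ≤ B := by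
  obtain ⟨B, hB⟩ := hs.exists_bound_of_continuousOn
    (f := fun X : Matrix m n ℝ => (Matrix.of.symm X : m → n → ℝ))
    (continuous_id (X := m → n → ℝ)).continuousOn
  exact ⟨B, fun X hX i j =>
    ((norm_le_pi_norm (X i) j).trans (norm_le_pi_norm X i)).trans (hB X hX)⟩

namespace Matrix.SpecialLinearGroup

-- The topology on `SL_m(ℝ)` fixed above agrees with Mathlib's only up to unfolding, so the
-- instances below are not found automatically.
instance (m : ℕ) : IsTopologicalGroup (SpecialLinearGroup (Fin m) ℝ) :=
  topologicalGroup

instance (m : ℕ) : LocallyCompactSpace (SpecialLinearGroup (Fin m) ℝ) :=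
  have : LocallyCompactSpace (Matrix (Fin m) (Fin m) ℝ) :=
    inferInstanceAs (LocallyCompactSpace (Fin m → Fin m → ℝ))
  isClosedEmbedding_val.locallyCompactSpace

instance (m : ℕ) : IsClosed (SLZ m : Set (SpecialLinearGroup (Fin m) ℝ)) :=
  (Int.isClosedEmbedding_coe_real.specialLinearGroup_map (f := Int.castRingHom ℝ)).isClosed_range

theorem exists_abs_rpow_smul_apply_le {m : ℕ} {T : Set ℝ}
    {L : Set (SpecialLinearGroup (Fin m) ℝ)} (hT : IsCompact T) (hT0 : ∀ t ∈ T, 0 < t)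
    (hL : IsCompact L) (r : ℝ) :
    ∃ B, ∀ t ∈ T, ∀ A ∈ L, ∀ a b,
      |(t ^ r • (A : Matrix (Fin m) (Fin m) ℝ)) a b| ≤ B := by
  have hcont : ContinuousOn (fun x : ℝ × SpecialLinearGroup (Fin m) ℝ =>
      x.1 ^ r • (x.2 : Matrix (Fin m) (Fin m) ℝ)) (T ×ˢ L) :=
    (continuousOn_fst.rpow_const fun x hx => .inl (hT0 x.1 hx.1).ne').smul
      (continuous_subtype_val.comp continuous_snd).continuousOn
  obtain ⟨B, hB⟩ := ((hT.prod hL).image_of_continuousOn hcont).exists_bound_abs_apply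
  exact ⟨B, fun t ht A hA => hB _ ⟨(t, A), ⟨ht, hA⟩, rfl⟩⟩

end Matrix.SpecialLinearGroup

section Parabolic

variable {N l : ℕ} {part : Fin (l + 1) → ℕ}

theorem part_succ_le_castSucc (hmono : StrictMono part) {k k' : Fin l} (h : k < k') :
    part k.succ ≤ part k'.castSucc :=
  hmono.monotone (Fin.succ_le_castSucc_iff.2 h)

theorem exists_part_castSucc_le_lt_succ (hlast : part (Fin.last l) = N) (h0 : part 0 = 0)
    (i : Fin N) :
    ∃ k : Fin l, part k.castSucc ≤ i ∧ (i : ℕ) < part k.succ := by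
  by_contra! h
  have hle : ∀ k : Fin (l + 1), part k ≤ i :=
    Fin.induction (by rw [h0]; exact Nat.zero_le _) fun k hk => h k hk
  have := hle (Fin.last l)
  omega

theorem isClosed_setOf_isBUT : IsClosed {A : Matrix (Fin N) (Fin N) ℝ | IsBUT N l part A} := by
  simp only [IsBUT, Set.ofPred_forall]
  exact isClosed_iInter fun _ => isClosed_iInter fun r => isClosed_iInter fun c =>
    isClosed_iInter fun _ => isClosed_iInter fun _ =>
      isClosed_singleton.preimage (continuous_id.matrix_elem r c)

variable (hmono : StrictMono part) (hlast : part (Fin.last l) = N)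

theorem blockEmb_injective :
    Function.Injective fun x : Σ k : Fin l, Fin (part k.succ - part k.castSucc) =>
      blockEmb N l part hmono hlast x.1 x.2 := by
  rintro ⟨k, a⟩ ⟨k', a'⟩ h
  have hval : part k.castSucc + a = part k'.castSucc + a' := congrArg Fin.val h
  have hk := hmono (Fin.castSucc_lt_succ : k.castSucc < k.succ)
  have hk' := hmono (Fin.castSucc_lt_succ : k'.castSucc < k'.succ)
  have ha := a.isLt
  have ha' := a'.isLt
  obtain rfl : k = k' := by
    by_contra hne
    rcases lt_or_gt_of_ne hne with h | h
    · have := part_succ_le_castSucc hmono h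
      omega
    · have := part_succ_le_castSucc hmono h
      omega
  obtain rfl : a = a' := Fin.ext (by omega)
  rfl

def blockEquiv (h0 : part 0 = 0) : (Σ k : Fin l, Fin (part k.succ - part k.castSucc)) ≃ Fin N :=
  Equiv.ofBijective _ ⟨blockEmb_injective hmono hlast, fun i => by
    obtain ⟨k, hk, hk'⟩ := exists_part_castSucc_le_lt_succ hlast h0 i
    exact ⟨⟨k, ⟨i - part k.castSucc, by omega⟩⟩, Fin.ext (by simp [blockEmb]; omega)⟩⟩

theorem isBUT_iff_blockTriangular (h0 : part 0 = 0) (p : Matrix (Fin N) (Fin N) ℝ) :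
    IsBUT N l part p ↔ (p.submatrix (blockEquiv hmono hlast h0)
      (blockEquiv hmono hlast h0)).BlockTriangular Sigma.fst := by
  constructor
  · rintro hp ⟨k, a⟩ ⟨m, b⟩ (hmk : m < k)
    have := part_succ_le_castSucc hmono hmk
    exact hp k.castSucc _ _ (Nat.le_add_right _ _) (by simp [blockEquiv, blockEmb]; omega)
  · intro hp κ r c hr hc
    obtain ⟨⟨k, a⟩, rfl⟩ := (blockEquiv hmono hlast h0).surjective r
    obtain ⟨⟨m, b⟩, rfl⟩ := (blockEquiv hmono hlast h0).surjective c
    simp only [blockEquiv, Equiv.ofBijective_apply, blockEmb] at hr hc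
    have hmκ : m.castSucc < κ := hmono.lt_iff_lt.1 (by omega)
    have hκk : κ < k.succ := hmono.lt_iff_lt.1 (by omega)
    exact hp (show m < k by simp only [Fin.lt_def, Fin.val_succ, Fin.val_castSucc] at *; omega)

theorem mem_Pset_iff (h0 : part 0 = 0) (p : Matrix (Fin N) (Fin N) ℝ) :
    p ∈ Pset N l part hmono hlast ↔
      p.submatrix (blockEquiv hmono hlast h0) (blockEquiv hmono hlast h0) ∈
        Matrix.sigmaParabolic fun k : Fin l => Fin (part k.succ - part k.castSucc) := by
  rw [Pset, Set.mem_ofPred_eq, isBUT_iff_blockTriangular hmono hlast h0, Matrix.sigmaParabolic,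
    Set.mem_ofPred_eq, det_submatrix_equiv_self]
  rfl

theorem mul_mem_Pset (h0 : part 0 = 0) {p q : Matrix (Fin N) (Fin N) ℝ}
    (hp : p ∈ Pset N l part hmono hlast) (hq : q ∈ Pset N l part hmono hlast) :
    p * q ∈ Pset N l part hmono hlast := by
  rw [mem_Pset_iff hmono hlast h0] at hp hq ⊢
  rw [← submatrix_mul_equiv p q _ (blockEquiv hmono hlast h0)]
  exact Matrix.mul_mem_sigmaParabolic hp hq

theorem dblock_mul (h0 : part 0 = 0) {p q : Matrix (Fin N) (Fin N) ℝ} (hp : IsBUT N l part p)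
    (hq : IsBUT N l part q) (k : Fin l) :
    dblock N l part hmono hlast (p * q) k =
      dblock N l part hmono hlast p k * dblock N l part hmono hlast q k := by
  rw [isBUT_iff_blockTriangular hmono hlast h0] at hp hq
  change blockDiag'
    ((p * q).submatrix (blockEquiv hmono hlast h0) (blockEquiv hmono hlast h0)) k = _
  rw [← submatrix_mul_equiv p q _ (blockEquiv hmono hlast h0), hp.blockDiag'_mul hq]
  rfl

theorem exists_int_det_eq_one_map_eq_dblock (h0 : part 0 = 0) (γ : Matrix (Fin N) (Fin N) ℤ)
    (hγ : γ.map (Int.cast : ℤ → ℝ) ∈ Pset N l part hmono hlast) (k : Fin l) :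
    ∃ δ : Matrix (Fin (part k.succ - part k.castSucc)) (Fin (part k.succ - part k.castSucc)) ℤ,
      δ.det = 1 ∧
        δ.map (Int.cast : ℤ → ℝ) = dblock N l part hmono hlast (γ.map Int.cast) k :=
  ⟨blockDiag' (γ.submatrix (blockEquiv hmono hlast h0) (blockEquiv hmono hlast h0)) k,
    Matrix.det_blockDiag'_eq_one_of_map_mem_sigmaParabolic
      ((mem_Pset_iff hmono hlast h0 _).1 hγ) k,
    rfl⟩

theorem dblock_eq_rpow_smul_nblock (p : Pset N l part hmono hlast) (k : Fin l) :
    dblock N l part hmono hlast p k =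
      (dblock N l part hmono hlast p k).det ^
          (1 / ((part k.succ - part k.castSucc : ℕ) : ℝ)) •
        (nblock N l part hmono hlast p k : Matrix _ _ ℝ) := by
  change _ = _ • _ • _
  rw [smul_smul, ← Real.rpow_add (dblock_det_pos N l part hmono hlast p k), ← add_div,
    add_neg_cancel, zero_div, Real.rpow_zero, one_smul]

theorem dblock_mul_eq_rpow_smul_nblock_mul (p : Pset N l part hmono hlast) (k : Fin l)
    (z : SpecialLinearGroup (Fin (part k.succ - part k.castSucc)) ℤ) :
    dblock N l part hmono hlast p k * (z : Matrix (Fin (part k.succ - part k.castSucc))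
        (Fin (part k.succ - part k.castSucc)) ℤ).map (Int.cast : ℤ → ℝ) =
      (dblock N l part hmono hlast p k).det ^
          (1 / ((part k.succ - part k.castSucc : ℕ) : ℝ)) •
        (nblock N l part hmono hlast p k * SpecialLinearGroup.map (Int.castRingHom ℝ) z :
          Matrix _ _ ℝ) := by
  change _ = _ • ((nblock N l part hmono hlast p k : Matrix (Fin (part k.succ - part k.castSucc))
    (Fin (part k.succ - part k.castSucc)) ℝ) * _)
  rw [← Matrix.smul_mul, ← dblock_eq_rpow_smul_nblock]
  rfl

def parabolicProjection (p : Pset N l part hmono hlast) : ParabolicTarget l part :=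
  (fun k => ⟨(dblock N l part hmono hlast p k).det, dblock_det_pos N l part hmono hlast p k⟩,
    fun k => QuotientGroup.mk (nblock N l part hmono hlast p k))

theorem parabolicProjection_eq_of_pRel (h0 : part 0 = 0) {p q : Pset N l part hmono hlast}
    (hpq : pRel N l part hmono hlast p q) :
    parabolicProjection hmono hlast p = parabolicProjection hmono hlast q := by
  obtain ⟨γ, hγ, hq⟩ := hpq
  choose δ hδ hδγ using exists_int_det_eq_one_map_eq_dblock hmono hlast h0 γ hγ
  have hblock : ∀ k, dblock N l part hmono hlast q k =
      dblock N l part hmono hlast p k * (δ k).map (Int.cast : ℤ → ℝ) := fun k => by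
    rw [hq, hδγ k]
    exact dblock_mul hmono hlast h0 p.2.2.1 hγ.2.1 k
  have hdet : ∀ k,
      (dblock N l part hmono hlast q k).det = (dblock N l part hmono hlast p k).det := fun k => by
    rw [hblock, det_mul, ← Int.cast_det, hδ, Int.cast_one, mul_one]
  have hnblock : ∀ k, nblock N l part hmono hlast q k =
      nblock N l part hmono hlast p k *
        SpecialLinearGroup.map (Int.castRingHom ℝ) ⟨δ k, hδ k⟩ :=
    fun k => Subtype.ext <| by
      change _ • _ = (_ • _) * (δ k).map _
      rw [hdet k, hblock k, Matrix.smul_mul]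
      rfl
  refine Prod.ext (funext fun k => Subtype.ext (hdet k).symm) (funext fun k => ?_)
  change QuotientGroup.mk _ = QuotientGroup.mk _
  rw [hnblock k]
  exact (QuotientGroup.mk_mul_of_mem _ (MonoidHom.mem_range.2 ⟨_, rfl⟩)).symm

theorem continuous_dblock (k : Fin l) :
    Continuous fun p : Matrix (Fin N) (Fin N) ℝ => dblock N l part hmono hlast p k :=
  continuous_matrix fun _ _ => continuous_id.matrix_elem _ _

theorem continuous_parabolicProjection : Continuous (parabolicProjection hmono hlast) := by
  have hblock : ∀ k, Continuous fun p : Pset N l part hmono hlast =>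
      dblock N l part hmono hlast p k :=
    fun k => (continuous_dblock hmono hlast k).comp continuous_subtype_val
  refine .prodMk (continuous_pi fun k => (hblock k).matrix_det.subtype_mk _)
    (continuous_pi fun k => continuous_quot_mk.comp (Continuous.subtype_mk ?_ _))
  exact ((hblock k).matrix_det.rpow_const fun p =>
    .inl (dblock_det_pos N l part hmono hlast p k).ne').smul (hblock k)

theorem exists_pRel_submatrix_eq (h0 : part 0 = 0) (p : Pset N l part hmono hlast)
    {Γ : Matrix (Σ k : Fin l, Fin (part k.succ - part k.castSucc)) _ ℤ}
    (hΓ : Γ.map (Int.cast : ℤ → ℝ) ∈ Matrix.sigmaParabolic _) :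
    ∃ q : Pset N l part hmono hlast, pRel N l part hmono hlast p q ∧
      (q : Matrix (Fin N) (Fin N) ℝ).submatrix (blockEquiv hmono hlast h0)
          (blockEquiv hmono hlast h0) =
        (p : Matrix (Fin N) (Fin N) ℝ).submatrix (blockEquiv hmono hlast h0)
          (blockEquiv hmono hlast h0) * Γ.map (Int.cast : ℤ → ℝ) := by
  set e := blockEquiv hmono hlast h0
  set g : Matrix (Fin N) (Fin N) ℤ := Γ.submatrix e.symm e.symm
  have hge : (g.map (Int.cast : ℤ → ℝ)).submatrix e e = Γ.map (Int.cast : ℤ → ℝ) := by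
    ext x y
    simp [g]
  have hg : g.map (Int.cast : ℤ → ℝ) ∈ Pset N l part hmono hlast := by
    rw [mem_Pset_iff hmono hlast h0, hge]
    exact hΓ
  refine ⟨⟨_, mul_mem_Pset hmono hlast h0 p.2 hg⟩, ⟨g, hg, rfl⟩, ?_⟩
  rw [← hge, submatrix_mul_equiv]

theorem exists_pRel_dblock_eq_abs_le (h0 : part 0 = 0) (p : Pset N l part hmono hlast)
    (z : ∀ k : Fin l, Matrix (Fin (part k.succ - part k.castSucc))
      (Fin (part k.succ - part k.castSucc)) ℤ) (hz : ∀ k, (z k).det = 1) {B : ℝ}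
    (hB : ∀ k a b, |(dblock N l part hmono hlast p k *
      (z k).map (Int.cast : ℤ → ℝ)) a b| ≤ B) :
    ∃ q : Pset N l part hmono hlast, pRel N l part hmono hlast p q ∧
      (∀ k, dblock N l part hmono hlast q k =
        dblock N l part hmono hlast p k * (z k).map (Int.cast : ℤ → ℝ)) ∧
      ∀ i j, |(q : Matrix (Fin N) (Fin N) ℝ) i j| ≤ N * B := by
  set e := blockEquiv hmono hlast h0
  have hp := (mem_Pset_iff hmono hlast h0 p).1 p.2
  set D : Matrix (Σ k : Fin l, Fin (part k.succ - part k.castSucc)) _ ℤ := blockDiagonal' z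
  have hD : D.BlockTriangular Sigma.fst := blockTriangular_blockDiagonal' _
  have hDℝ : (D.map (Int.cast : ℤ → ℝ)).BlockTriangular Sigma.fst :=
    hD.map (Int.castRingHom ℝ)
  set M := (p : Matrix (Fin N) (Fin N) ℝ).submatrix e e * D.map (Int.cast : ℤ → ℝ)
  have hM : M.BlockTriangular Sigma.fst := hp.2.1.mul hDℝ
  have hMk : ∀ k, blockDiag' M k =
      dblock N l part hmono hlast p k * (z k).map (Int.cast : ℤ → ℝ) := fun k => by
    rw [hp.2.1.blockDiag'_mul hDℝ, blockDiag'_map_apply, blockDiag'_blockDiagonal']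
    rfl
  have hMdet : ∀ k, IsUnit (blockDiag' M k).det := fun k => by
    rw [hMk, det_mul, ← Int.cast_det, hz k, Int.cast_one, mul_one]
    exact (dblock_det_pos N l part hmono hlast p k).ne'.isUnit
  obtain ⟨γ, hγ, hγk, hγB⟩ :=
    Matrix.exists_blockUnipotent_abs_mul_le M hM hMdet fun k => hMk k ▸ hB k
  obtain ⟨q, hpq, hqe⟩ := exists_pRel_submatrix_eq hmono hlast h0 p
    (Matrix.map_mem_sigmaParabolic_of_det_blockDiag' (hD.mul hγ) fun k => by
      rw [hD.blockDiag'_mul hγ, blockDiag'_blockDiagonal', hγk, Matrix.mul_one]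
      exact hz k)
  have hmap : (D * γ).map (Int.cast : ℤ → ℝ) = D.map Int.cast * γ.map Int.cast :=
    Matrix.map_mul (f := Int.castRingHom ℝ)
  rw [hmap, ← Matrix.mul_assoc] at hqe
  have hγℝ : (γ.map (Int.cast : ℤ → ℝ)).BlockTriangular Sigma.fst :=
    hγ.map (Int.castRingHom ℝ)
  refine ⟨q, hpq, fun k => ?_, fun i j => ?_⟩
  · change blockDiag' ((q : Matrix (Fin N) (Fin N) ℝ).submatrix e e) k = _
    rw [hqe, hM.blockDiag'_mul hγℝ, hMk, blockDiag'_map_apply, hγk,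
      Matrix.map_one _ Int.cast_zero Int.cast_one, Matrix.mul_one]
  · obtain ⟨x, rfl⟩ := e.surjective i
    obtain ⟨y, rfl⟩ := e.surjective j
    have := hγB x y
    rwa [← hqe, Fintype.card_congr e, Fintype.card_fin] at this

theorem isCompact_setOf_det_dblock_mem {T : Fin l → Set ℝ} (hT : ∀ k, IsClosed (T k))
    (c : ℝ) :
    IsCompact {A : Matrix (Fin N) (Fin N) ℝ | A.det = 1 ∧ IsBUT N l part A ∧
      (∀ k, (dblock N l part hmono hlast A k).det ∈ T k) ∧ ∀ i j, |A i j| ≤ c} := by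
  refine (Matrix.isCompact_setOf_abs_apply_le c).of_isClosed_subset ?_ fun A hA => hA.2.2.2
  simp only [Set.ofPred_and, Set.ofPred_forall]
  exact (isClosed_eq continuous_id.matrix_det continuous_const).inter <|
    isClosed_setOf_isBUT.inter <|
    (isClosed_iInter fun k => (hT k).preimage (continuous_dblock hmono hlast k).matrix_det).inter <|
      isClosed_iInter fun i => isClosed_iInter fun j =>
        isClosed_le (continuous_id.matrix_elem i j).abs continuous_const

theorem exists_isCompact_forall_exists_pRel (h0 : part 0 = 0) {K : Set (ParabolicTarget l part)}
    (hK : IsCompact K) :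
    ∃ C : Set (Pset N l part hmono hlast), IsCompact C ∧
      ∀ p, parabolicProjection hmono hlast p ∈ K →
        ∃ q ∈ C, pRel N l part hmono hlast p q := by
  choose L hL hKL using fun k => (hK.image (f := fun y : ParabolicTarget l part => y.2 k)
    (by fun_prop)).exists_isCompact_subset_image_of_isOpenMap (QuotientGroup.isOpenMap_coe)
      QuotientGroup.mk_surjective
  set T : Fin l → Set ℝ := fun k => (fun y : ParabolicTarget l part => (y.1 k : ℝ)) '' K
  have hT : ∀ k, IsCompact (T k) := fun k => hK.image (by fun_prop)
  have hT0 : ∀ k, ∀ t ∈ T k, 0 < t := by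
    rintro k _ ⟨y, -, rfl⟩
    exact (y.1 k).2
  choose Bk hBk using fun k => SpecialLinearGroup.exists_abs_rpow_smul_apply_le (hT k) (hT0 k)
    (hL k) (1 / ((part k.succ - part k.castSucc : ℕ) : ℝ))
  obtain ⟨B, hB⟩ := Finite.bddAbove_range Bk
  refine ⟨Subtype.val ⁻¹' {A | A.det = 1 ∧ IsBUT N l part A ∧
      (∀ k, (dblock N l part hmono hlast A k).det ∈ T k) ∧ ∀ i j, |A i j| ≤ N * B},
    Topology.IsInducing.subtypeVal.isCompact_preimage'
      (isCompact_setOf_det_dblock_mem hmono hlast (fun k => (hT k).isClosed) _) ?_,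
    fun p hp => ?_⟩
  · rintro A ⟨h1, h2, h3, -⟩
    exact ⟨⟨A, h1, h2, fun k => hT0 k _ (h3 k)⟩, rfl⟩
  have hz : ∀ k, ∃ z, nblock N l part hmono hlast p k *
      SpecialLinearGroup.map (Int.castRingHom ℝ) z ∈ L k := fun k => by
    obtain ⟨A, hA, hAp⟩ := hKL k ⟨_, hp, rfl⟩
    obtain ⟨z, hz⟩ := QuotientGroup.eq.1 hAp.symm
    exact ⟨z, by rwa [hz, mul_inv_cancel_left]⟩
  choose z hz using hz
  obtain ⟨q, hpq, hqk, hqB⟩ := exists_pRel_dblock_eq_abs_le hmono hlast h0 p (fun k => z k)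
    (fun k => (z k).2) (B := B) fun k a b => by
      rw [dblock_mul_eq_rpow_smul_nblock_mul]
      exact (hBk k _ ⟨_, hp, rfl⟩ _ (hz k) a b).trans (hB ⟨k, rfl⟩)
  refine ⟨q, ⟨q.2.1, q.2.2.1, fun k => ?_, hqB⟩, hpq⟩
  rw [hqk, det_mul, ← Int.cast_det, (z k).2, Int.cast_one, mul_one]
  exact ⟨_, hp, rfl⟩

end Parabolic

theorem statement14_general (N l : ℕ) (part : Fin (l + 1) → ℕ)
    (h0 : part 0 = 0) (hmono : StrictMono part) (hlast : part (Fin.last l) = N) :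
    (∀ γ : Matrix (Fin N) (Fin N) ℤ,
      γ.map (Int.cast : ℤ → ℝ) ∈ Pset N l part hmono hlast →
      ∀ k : Fin l,
        ∃ δ : Matrix (Fin (part k.succ - part k.castSucc))
            (Fin (part k.succ - part k.castSucc)) ℤ,
          δ.det = 1 ∧
          δ.map (Int.cast : ℤ → ℝ) =
            dblock N l part hmono hlast (γ.map (Int.cast : ℤ → ℝ)) k) ∧
    ∃ Φ : PQuot N l part hmono hlast → ParabolicTarget l part,
      (∀ p : ↥(Pset N l part hmono hlast),
        Φ (Quot.mk _ p) =
          (fun k => ⟨(dblock N l part hmono hlast (p : Matrix (Fin N) (Fin N) ℝ) k).det,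
              dblock_det_pos N l part hmono hlast p k⟩,
           fun k => QuotientGroup.mk (nblock N l part hmono hlast p k))) ∧
      Continuous Φ ∧
      (∀ K : Set (ParabolicTarget l part), IsCompact K → IsCompact (Φ ⁻¹' K)) := by
  have hΦ : Continuous (Quot.lift (parabolicProjection hmono hlast)
      fun _ _ => parabolicProjection_eq_of_pRel hmono hlast h0) :=
    continuous_quot_lift _ (continuous_parabolicProjection hmono hlast)
  refine ⟨exists_int_det_eq_one_map_eq_dblock hmono hlast h0, _, fun _ => rfl, hΦ,
    fun K hK => ?_⟩
  obtain ⟨C, hC, hCK⟩ := exists_isCompact_forall_exists_pRel hmono hlast h0 hK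
  refine (hC.image continuous_quot_mk).of_isClosed_subset (hK.isClosed.preimage hΦ) ?_
  rintro ⟨p⟩ hp
  obtain ⟨q, hq, hpq⟩ := hCK p hp
  exact ⟨q, hq, (Quot.sound hpq).symm⟩

/-- (a) For `γ ∈ Γ_P = P ∩ SL_N(ℤ)`, each diagonal block `γ_k` lies in `SL_{j_k}(ℤ)`;
(b) the map `p ↦ ((det p_k)_k, ((det p_k)^{-1/j_k}·p_k · SL_{j_k}(ℤ))_k)` descends to a
well-defined map `Φ` on `P/Γ_P` which is continuous and proper. -/
theorem statement14 (N l : ℕ) (hl : 1 ≤ l) (part : Fin (l + 1) → ℕ)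
    (h0 : part 0 = 0) (hmono : StrictMono part) (hlast : part (Fin.last l) = N) :
    (∀ γ : Matrix (Fin N) (Fin N) ℤ,
      γ.map (Int.cast : ℤ → ℝ) ∈ Pset N l part hmono hlast →
      ∀ k : Fin l,
        ∃ δ : Matrix (Fin (part k.succ - part k.castSucc))
            (Fin (part k.succ - part k.castSucc)) ℤ,
          δ.det = 1 ∧
          δ.map (Int.cast : ℤ → ℝ) =
            dblock N l part hmono hlast (γ.map (Int.cast : ℤ → ℝ)) k) ∧
    ∃ Φ : PQuot N l part hmono hlast → ParabolicTarget l part,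
      (∀ p : ↥(Pset N l part hmono hlast),
        Φ (Quot.mk _ p) =
          (fun k => ⟨(dblock N l part hmono hlast (p : Matrix (Fin N) (Fin N) ℝ) k).det,
              dblock_det_pos N l part hmono hlast p k⟩,
           fun k => QuotientGroup.mk (nblock N l part hmono hlast p k))) ∧
      Continuous Φ ∧
      (∀ K : Set (ParabolicTarget l part), IsCompact K → IsCompact (Φ ⁻¹' K)) :=
  statement14_general N l part h0 hmono hlast
end
end
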